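/- arXiv:2001.00134 — 3 statements merged into one kernel-verified Lean document; each statement's English description precedes it below -/
import Mathlib

section
/- Let Q be an irreducible regular Q-matrix on a countable set E whose embedding chain Π is recurrent, and let H be a nonempty finite subset of E. Then the Q-process is non-ergodic (i.e. 𝔼_i σ_H = ∞ for some i ∈ E) if and only if there exists a sequence of functions y⁽ⁿ⁾ : E → ℝ (n ≥ 1) such that: (1) for each n, sup_{i∈E} y⁽ⁿ⁾(i) < ∞ and y⁽ⁿ⁾(i) ≤ Σ_{j∉H} Π(i,j)·y⁽ⁿ⁾(j) + 1/q_i for every i ∈ E; and (2) sup_{n≥1} max_{i∈H} y⁽ⁿ⁾(i) = ∞. -/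
open scoped ENNReal NNReal BigOperators Classical Topology
open Filter Set

noncomputable section

/-- `q` is a Q-matrix: nonnegative off-diagonal entries, and for every state `i` the
off-diagonal row sums converge to `q_i := -q i i ∈ (0,∞)`. -/
structure IsQMatrix {E : Type*} (q : E → E → ℝ) : Prop where
  offdiag_nonneg : ∀ i j, i ≠ j → 0 ≤ q i j
  diag_neg : ∀ i, 0 < -q i i
  row_hasSum : ∀ i, HasSum (fun j => if j = i then 0 else q i j) (-q i i)

/-- Irreducibility: any two distinct states are joined by a finite chain of positive entries. -/
def MatIrreducible {E : Type*} (M : E → E → ℝ) : Prop :=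
  ∀ i j : E, i ≠ j → Relation.TransGen (fun a b => 0 < M a b) i j

/-- Regularity (non-explosiveness) of a Q-matrix. -/
def QRegular {E : Type*} (q : E → E → ℝ) : Prop :=
  ∃ lam : ℝ, 0 < lam ∧
    ∀ u : E → ℝ, (∀ i, 0 ≤ u i) → (∀ i, u i ≤ 1) →
      (∀ i, HasSum (fun j => q i j * u j) (lam * u i)) → ∀ i, u i = 0

/-- The embedding chain `Π(i,j) = q(i,j)/q_i` for `j ≠ i`, `Π(i,i) = 0`, as `ℝ≥0∞`. -/
def embed {E : Type*} (q : E → E → ℝ) (i j : E) : ℝ≥0∞ :=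
  if j = i then 0 else ENNReal.ofReal (q i j / (-q i i))

/-- `x` is the minimal nonnegative solution of the system `x i = ∑ j, A i j * x j + g i`. -/
def IsMinSol {ι : Type*} (A : ι → ι → ℝ≥0∞) (g : ι → ℝ≥0∞) (x : ι → ℝ≥0∞) : Prop :=
  (∀ i, x i = (∑' j, A i j * x j) + g i) ∧
    ∀ y : ι → ℝ≥0∞, (∀ i, y i = (∑' j, A i j * y j) + g i) → ∀ i, x i ≤ y i

/-- Recurrence of a stochastic `ℝ≥0∞`-matrix at a state `o`: the minimal nonnegative
solution of `u i = ∑_{j ≠ o} P i j * u j + P i o` (for `i ≠ o`) is identically 1. -/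
def RecurrentAt {E : Type*} (P : E → E → ℝ≥0∞) (o : E) : Prop :=
  ∀ u : {i : E // i ≠ o} → ℝ≥0∞,
    IsMinSol (fun i j : {i : E // i ≠ o} => P i.1 j.1) (fun i => P i.1 o) u → ∀ i, u i = 1

/-- Recurrence of a stochastic `ℝ≥0∞`-matrix (at some state). -/
def MatRecurrent {E : Type*} (P : E → E → ℝ≥0∞) : Prop := ∃ o : E, RecurrentAt P o

/-- `m l i = 𝔼_i σ_H ^ l`: the family of moments of the return time to `H`,
defined inductively via minimal nonnegative solutions. -/
def IsMomentSeq {E : Type*} (q : E → E → ℝ) (H : Set E) (m : ℕ → E → ℝ≥0∞) : Prop :=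
  (∀ i, m 0 i = 1) ∧
    ∀ l : ℕ,
      IsMinSol (fun i j => if j ∈ H then 0 else embed q i j)
        (fun i => (((l : ℝ≥0∞) + 1) / ENNReal.ofReal (-q i i)) * m l i) (m (l + 1))

/-- A stochastic matrix. -/
def IsStochastic {E : Type*} (P : E → E → ℝ) : Prop :=
  (∀ i j, 0 ≤ P i j) ∧ ∀ i, HasSum (P i) 1

/-- `n`-step transition "probabilities" of `P`, valued in `ℝ≥0∞`. -/
def nstepE {E : Type*} (P : E → E → ℝ) : ℕ → E → E → ℝ≥0∞
  | 0 => fun i j => if i = j then 1 else 0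
  | n + 1 => fun i j => ∑' k, nstepE P n i k * ENNReal.ofReal (P k j)

/-- Aperiodicity: every state has period 1 (the gcd of its positive return times is 1). -/
def MatAperiodic {E : Type*} (P : E → E → ℝ) : Prop :=
  ∀ i : E, ∀ d : ℕ, (∀ n : ℕ, 0 < n → 0 < nstepE P n i i → d ∣ n) → d = 1

/-- `sigmaDist P H n i = ℙ_i (σ_H = n + 1)`, where `σ_H = inf {n ≥ 1 : X n ∈ H}` is the
return time to `H` of the chain with transition matrix `P` started at `i`. -/
def sigmaDist {E : Type*} (P : E → E → ℝ) (H : Set E) : ℕ → E → ℝ≥0∞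
  | 0 => fun i => ∑' j, if j ∈ H then ENNReal.ofReal (P i j) else 0
  | n + 1 => fun i => ∑' j, if j ∈ H then 0 else ENNReal.ofReal (P i j) * sigmaDist P H n j

/-- Recurrence of the discrete-time chain: `ℙ_i (σ_H < ∞) = 1` for every `i`. -/
def DRecurrent {E : Type*} (P : E → E → ℝ) (H : Set E) : Prop :=
  ∀ i, (∑' n, sigmaDist P H n i) = 1

/-- `dMoment P H l i = 𝔼_i σ_H ^ l` (for a recurrent chain). -/
def dMoment {E : Type*} (P : E → E → ℝ) (H : Set E) (l : ℕ) (i : E) : ℝ≥0∞ :=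
  ∑' n : ℕ, ((n + 1 : ℕ) : ℝ≥0∞) ^ l * sigmaDist P H n i

/-- A single birth Q-matrix on ℕ. -/
def IsSingleBirth (q : ℕ → ℕ → ℝ) : Prop :=
  (∀ i, 0 < q i (i + 1)) ∧ ∀ i j, 2 ≤ j → q i (i + j) = 0

/-- `sbF q n i = F_n^{(i)}` of single birth theory. -/
def sbF (q : ℕ → ℕ → ℝ) : ℕ → ℕ → ℝ
  | n, i =>
    if i = n then 1
    else (1 / q n (n + 1)) *
      ∑ k ∈ (Finset.Ico i n).attach,
        (∑ j ∈ Finset.range (k.1 + 1), q n j) * sbF q k.1 i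
  termination_by n i => n
  decreasing_by exact (Finset.mem_Ico.mp k.2).2

/-- `sbd q n = d_n` of single birth theory. -/
def sbd (q : ℕ → ℕ → ℝ) : ℕ → ℝ
  | 0 => 0
  | n + 1 =>
    (1 / q (n + 1) (n + 2)) *
      (1 + ∑ k ∈ (Finset.range (n + 1)).attach,
        (∑ j ∈ Finset.range (k.1 + 1), q (n + 1) j) * sbd q k.1)
  termination_by n => n
  decreasing_by exact Finset.mem_range.mp k.2

/-- `d = sup_k (∑_{n=0}^k d_n) / (∑_{n=0}^k F_n^{(0)})`, valued in `ℝ≥0∞`. -/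
def sbdConst (q : ℕ → ℕ → ℝ) : ℝ≥0∞ :=
  ⨆ k : ℕ, ENNReal.ofReal
    ((∑ n ∈ Finset.range (k + 1), sbd q n) / (∑ n ∈ Finset.range (k + 1), sbF q n 0))

/-- Solutions of the truncated single-birth system
`x i = ∑_{1 ≤ j ≤ N, j ≠ i} (q i j / q_i) x j + 1 / q_i` for `1 ≤ i ≤ N`. -/
def sbTruncSol (q : ℕ → ℕ → ℝ) (N : ℕ) (x : ℕ → ℝ) : Prop :=
  ∀ i, 1 ≤ i → i ≤ N →
    x i = (∑ j ∈ Finset.Icc 1 N, if j = i then 0 else (q i j / (-q i i)) * x j) + 1 / (-q i i)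

/-- The Q-matrix with `q(i, i+1) = i+1` and `q(i, 0) = α_i` (for `i ≥ 1`). -/
def catQ (a : ℕ → ℝ) : ℕ → ℕ → ℝ := fun i j =>
  if j = i + 1 then (i + 1 : ℝ)
  else if j = 0 ∧ 1 ≤ i then a i
  else if j = i then -((i + 1 : ℝ) + if 1 ≤ i then a i else 0)
  else 0

/-- `α_i = (log i)^{-γ}` for `i ≥ 3`, `α_1 = α_2 = 0`. -/
def logAlpha (γ : ℝ) : ℕ → ℝ := fun i => if 3 ≤ i then Real.log i ^ (-γ) else 0

/-- The stochastic matrix with `P(i, i+1) = p_i` and `P(i, 0) = 1 - p_i`. -/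
def birthP (p : ℕ → ℝ) : ℕ → ℕ → ℝ := fun i j =>
  if j = i + 1 then p i else if j = 0 then 1 - p i else 0

namespace NEIT

variable {ι : Type*}

lemma tsum_iSup_mono {f : ℕ → ι → ℝ≥0∞} (hf : Monotone f) :
    ∑' j, ⨆ n, f n j = ⨆ n, ∑' j, f n j := by
  rw [ENNReal.tsum_eq_iSup_sum]
  simp_rw [ENNReal.tsum_eq_iSup_sum]
  rw [iSup_comm]
  exact iSup_congr fun s => ENNReal.finsetSum_iSup_of_monotone fun a n n' h => hf h a

lemma iSup_mul_iSup_mono {f g : ℕ → ℝ≥0∞} (hf : Monotone f) (hg : Monotone g) :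
    (⨆ n, f n) * ⨆ n, g n = ⨆ n, f n * g n := by
  rw [ENNReal.iSup_mul]
  simp_rw [ENNReal.mul_iSup]
  refine le_antisymm (iSup_le fun n => iSup_le fun m => le_iSup_of_le (max n m) ?_)
    (iSup_le fun n => le_iSup_of_le n (le_iSup_of_le n le_rfl))
  exact mul_le_mul' (hf (le_max_left n m)) (hg (le_max_right n m))

/-- iterates `T^l g` of the affine operator associated to `(A, g)`. -/
def itr (A : ι → ι → ℝ≥0∞) (g : ι → ℝ≥0∞) : ℕ → ι → ℝ≥0∞
  | 0 => g
  | l + 1 => fun i => ∑' j, A i j * itr A g l j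

/-- the minimal nonnegative solution of `x = A x + g`, as a series. -/
def sol (A : ι → ι → ℝ≥0∞) (g : ι → ℝ≥0∞) (i : ι) : ℝ≥0∞ := ∑' l, itr A g l i

lemma sol_eq (A : ι → ι → ℝ≥0∞) (g : ι → ℝ≥0∞) (i : ι) :
    sol A g i = (∑' j, A i j * sol A g j) + g i := by
  have h1 : ∀ j, A i j * sol A g j = ∑' l, A i j * itr A g l j := fun j =>
    ENNReal.tsum_mul_left.symm
  calc sol A g i = ∑' l, itr A g l i := rfl
    _ = itr A g 0 i + ∑' l, itr A g (l + 1) i := by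
        rw [tsum_eq_zero_add' ENNReal.summable]
    _ = (∑' l, ∑' j, A i j * itr A g l j) + g i := by rw [add_comm]; rfl
    _ = (∑' j, A i j * sol A g j) + g i := by
        rw [ENNReal.tsum_comm]; simp_rw [h1]

/-- partial sums of the series -/
def psum (A : ι → ι → ℝ≥0∞) (g : ι → ℝ≥0∞) (k : ℕ) (i : ι) : ℝ≥0∞ :=
  ∑ l ∈ Finset.range k, itr A g l i

lemma psum_succ (A : ι → ι → ℝ≥0∞) (g : ι → ℝ≥0∞) (k : ℕ) (i : ι) :
    psum A g (k + 1) i = (∑' j, A i j * psum A g k j) + g i := by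
  have : ∀ j, A i j * psum A g k j = ∑ l ∈ Finset.range k, A i j * itr A g l j := fun j => by
    rw [psum, Finset.mul_sum]
  simp_rw [this]
  rw [Summable.tsum_finsetSum fun l _ => ENNReal.summable]
  rw [psum, Finset.sum_range_succ']
  rfl

lemma psum_mono_k (A : ι → ι → ℝ≥0∞) (g : ι → ℝ≥0∞) : Monotone (psum A g) := by
  intro k k' h i
  exact Finset.sum_le_sum_of_subset (Finset.range_subset_range.2 h)

lemma sol_eq_iSup_psum (A : ι → ι → ℝ≥0∞) (g : ι → ℝ≥0∞) (i : ι) :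
    sol A g i = ⨆ k, psum A g k i := ENNReal.tsum_eq_iSup_nat

lemma psum_le_super {A : ι → ι → ℝ≥0∞} {g y : ι → ℝ≥0∞}
    (hy : ∀ i, (∑' j, A i j * y j) + g i ≤ y i) (k : ℕ) : ∀ i, psum A g k i ≤ y i := by
  induction k with
  | zero => intro i; simp [psum]
  | succ k ih =>

    intro i
    rw [psum_succ]
    refine le_trans ?_ (hy i)
    gcongr
    exact ih _


lemma sol_le_super {A : ι → ι → ℝ≥0∞} {g y : ι → ℝ≥0∞}
    (hy : ∀ i, (∑' j, A i j * y j) + g i ≤ y i) : ∀ i, sol A g i ≤ y i := fun i => by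
  rw [sol_eq_iSup_psum]; exact iSup_le fun k => psum_le_super hy k i

lemma isMinSol_sol (A : ι → ι → ℝ≥0∞) (g : ι → ℝ≥0∞) : IsMinSol A g (sol A g) :=
  ⟨sol_eq A g, fun y hy => sol_le_super fun i => (hy i).ge⟩

lemma minsol_eq_sol {A : ι → ι → ℝ≥0∞} {g m : ι → ℝ≥0∞} (hm : IsMinSol A g m) :
    m = sol A g :=
  funext fun i => le_antisymm (hm.2 _ (sol_eq A g) i) (sol_le_super (fun i => (hm.1 i).ge) i)

lemma minsol_le_super {A : ι → ι → ℝ≥0∞} {g m : ι → ℝ≥0∞} (hm : IsMinSol A g m)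
    {y : ι → ℝ≥0∞} (hy : ∀ i, (∑' j, A i j * y j) + g i ≤ y i) : ∀ i, m i ≤ y i := by
  rw [minsol_eq_sol hm]; exact sol_le_super hy

lemma itr_mono_coeff {A A' : ι → ι → ℝ≥0∞} {g g' : ι → ℝ≥0∞}
    (hA : ∀ i j, A i j ≤ A' i j) (hg : ∀ i, g i ≤ g' i) :
    ∀ l i, itr A g l i ≤ itr A' g' l i := by
  intro l
  induction l with
  | zero => exact hg
  | succ l ih =>
    intro i
    refine ENNReal.tsum_le_tsum fun j => ?_
    exact mul_le_mul' (hA i j) (ih j)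

lemma sol_mono_coeff {A A' : ι → ι → ℝ≥0∞} {g g' : ι → ℝ≥0∞}
    (hA : ∀ i j, A i j ≤ A' i j) (hg : ∀ i, g i ≤ g' i) (i : ι) :
    sol A g i ≤ sol A' g' i :=
  ENNReal.tsum_le_tsum fun l => itr_mono_coeff hA hg l i

lemma sol_iSup {An : ℕ → ι → ι → ℝ≥0∞} {gn : ℕ → ι → ℝ≥0∞}
    (hA : ∀ i j, Monotone fun n => An n i j) (hg : ∀ i, Monotone fun n => gn n i) (i : ι) :
    sol (fun i j => ⨆ n, An n i j) (fun i => ⨆ n, gn n i) i = ⨆ n, sol (An n) (gn n) i := by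
  have hitrmono : ∀ l j, Monotone fun n => itr (An n) (gn n) l j := fun l j n n' h =>
    itr_mono_coeff (fun i j => hA i j h) (fun i => hg i h) l j
  have key : ∀ l i, itr (fun i j => ⨆ n, An n i j) (fun i => ⨆ n, gn n i) l i
      = ⨆ n, itr (An n) (gn n) l i := by
    intro l
    induction l with
    | zero => intro i; rfl
    | succ l ih =>
      intro i
      show (∑' j, (⨆ n, An n i j) * itr _ _ l j) = _
      have : ∀ j, (⨆ n, An n i j) * itr (fun i j => ⨆ n, An n i j) (fun i => ⨆ n, gn n i) l j
          = ⨆ n, An n i j * itr (An n) (gn n) l j := fun j => by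
        rw [ih j]; exact iSup_mul_iSup_mono (fun n n' h => hA i j h) (fun n n' h => hitrmono l j h)
      simp_rw [this]
      rw [tsum_iSup_mono fun n n' h j => mul_le_mul' (hA i j h) (hitrmono l j h)]
      rfl
  show (∑' l, itr _ _ l i) = _
  simp_rw [key]
  rw [tsum_iSup_mono fun n n' h l => hitrmono l i h]
  rfl

section QM
variable {E : Type*} {q : E → E → ℝ}


lemma embed_row_sum (hq : IsQMatrix q) (i : E) : ∑' j, embed q i j = 1 := by
  have hd := hq.diag_neg i
  have h1 : HasSum (fun j => (if j = i then 0 else q i j) / (-q i i)) 1 := by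
    have := (hq.row_hasSum i).div_const (-q i i)
    rwa [div_self hd.ne'] at this
  have h2 : ∀ j, embed q i j = ENNReal.ofReal ((if j = i then 0 else q i j) / (-q i i)) := by
    intro j
    by_cases h : j = i <;> simp [embed, h]
  simp_rw [h2]
  rw [← ENNReal.ofReal_tsum_of_nonneg (fun j => ?_) h1.summable, h1.tsum_eq,
    ENNReal.ofReal_one]
  by_cases h : j = i
  · simp [h]
  · simp only [h, if_false]
    exact div_nonneg (hq.offdiag_nonneg i j (Ne.symm h)) hd.le

lemma embed_le_one (hq : IsQMatrix q) (i j : E) : embed q i j ≤ 1 :=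
  (ENNReal.le_tsum j).trans (embed_row_sum hq i).le

lemma embed_ne_top (hq : IsQMatrix q) (i j : E) : embed q i j ≠ ⊤ :=
  ((embed_le_one hq i j).trans_lt ENNReal.one_lt_top).ne

lemma embed_pos (hq : IsQMatrix q) {i j : E} (h : 0 < q i j) : 0 < embed q i j := by
  have hd := hq.diag_neg i
  have hne : j ≠ i := by
    rintro rfl
    exact absurd h (by linarith)
  rw [embed, if_neg hne]
  exact ENNReal.ofReal_pos.2 (div_pos h hd)

lemma row_split (hq : IsQMatrix q) (H : Set E) (i : E) :
    (∑' j, if j ∈ H then 0 else embed q i j) + (∑' j, if j ∈ H then embed q i j else 0)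
      = 1 := by
  rw [← ENNReal.tsum_add, ← embed_row_sum hq i]
  refine tsum_congr fun j => ?_
  by_cases h : j ∈ H <;> simp [h]

lemma killed_row_le_one (hq : IsQMatrix q) (H : Set E) (i : E) :
    (∑' j, if j ∈ H then 0 else embed q i j) ≤ 1 :=
  le_trans le_self_add (row_split hq H i).le

lemma exists_offdiag_pos (hq : IsQMatrix q) (i : E) : ∃ j, j ≠ i ∧ 0 < q i j := by
  by_contra hcon
  push_neg at hcon
  have : (fun j => if j = i then 0 else q i j) = fun _ => (0 : ℝ) := by
    funext j
    by_cases h : j = i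
    · simp [h]
    · simp only [h, if_false]
      exact le_antisymm (hcon j h) (hq.offdiag_nonneg i j (Ne.symm h))
  have h0 := hq.row_hasSum i
  rw [this] at h0
  exact absurd (hasSum_zero.unique h0) (hq.diag_neg i).ne

end QM

section Rec
variable {E : Type*} {q : E → E → ℝ}

lemma tsum_sub' {ι : Type*} {f g : ι → ℝ≥0∞} (hg : ∑' i, g i ≠ ⊤) (h : ∀ i, g i ≤ f i) :
    ∑' i, (f i - g i) = ∑' i, f i - ∑' i, g i :=
  ENNReal.eq_sub_of_add_eq hg
    (by rw [← ENNReal.tsum_add]; exact tsum_congr fun i => tsub_add_cancel_of_le (h i))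

lemma tsum_compl_point (f : E → ℝ≥0∞) (o : E) :
    ∑' j : {i : E // i ≠ o}, f j.1 = ∑' j, if j = o then 0 else f j := by
  have h1 : ∑' j : ({i : E | i ≠ o} : Set E), f j.1 = ∑' j, ({i : E | i ≠ o}).indicator f j :=
    tsum_subtype _ f
  rw [show ∑' j : {i : E // i ≠ o}, f j.1 = ∑' j : ({i : E | i ≠ o} : Set E), f j.1 from rfl, h1]
  refine tsum_congr fun j => ?_
  by_cases h : j = o <;> simp [Set.indicator, h]

lemma tsum_split_point (f : E → ℝ≥0∞) (o : E) :
    (∑' j : {i : E // i ≠ o}, f j.1) + f o = ∑' j, f j := by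
  rw [tsum_compl_point, add_comm]
  exact (ENNReal.tsum_eq_add_tsum_ite o).symm

lemma superharm_min_at (hq : IsQMatrix q) {o : E} (hrec : RecurrentAt (embed q) o)
    {w : E → ℝ≥0∞} (hw1 : ∀ i, w i ≤ 1)
    (hsup : ∀ i, (∑' j, embed q i j * w j) ≤ w i) : ∀ i, w o ≤ w i := by
  by_cases hwo : w o = 0
  · intro i; exact le_trans (le_of_eq hwo) (zero_le)
  have hwot : w o ≠ ⊤ := ((hw1 o).trans_lt ENNReal.one_lt_top).ne
  set v : {i : E // i ≠ o} → ℝ≥0∞ := fun i => min (w i.1 / w o) 1 with hv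
  have hsuper : ∀ i : {i : E // i ≠ o},
      (∑' j : {i : E // i ≠ o}, embed q i.1 j.1 * v j) + embed q i.1 o ≤ v i := by
    intro i
    refine le_min ?_ ?_
    · have step1 : (∑' j : {i : E // i ≠ o}, embed q i.1 j.1 * v j) + embed q i.1 o
          ≤ (∑' j : {i : E // i ≠ o}, embed q i.1 j.1 * (w j.1 / w o))
            + embed q i.1 o * (w o / w o) := by
        rw [ENNReal.div_self hwo hwot, mul_one]
        gcongr
        exact min_le_left _ _
      refine step1.trans ?_
      have step2 : (∑' j : {i : E // i ≠ o}, embed q i.1 j.1 * (w j.1 / w o))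
          + embed q i.1 o * (w o / w o) = ∑' j, embed q i.1 j * (w j / w o) :=
        tsum_split_point (fun j => embed q i.1 j * (w j / w o)) o
      rw [step2]
      have step3 : ∑' j, embed q i.1 j * (w j / w o)
          = (∑' j, embed q i.1 j * w j) / w o := by
        simp_rw [div_eq_mul_inv, ← mul_assoc]
        rw [ENNReal.tsum_mul_right]
      rw [step3]
      exact ENNReal.div_le_div_right (hsup i.1) _
    · calc (∑' j : {i : E // i ≠ o}, embed q i.1 j.1 * v j) + embed q i.1 o
          ≤ (∑' j : {i : E // i ≠ o}, embed q i.1 j.1 * 1) + embed q i.1 o := by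
            gcongr; exact min_le_right _ _
        _ = ∑' j, embed q i.1 j := by
            simp_rw [mul_one]; exact tsum_split_point (fun j => embed q i.1 j) o
        _ = 1 := embed_row_sum hq i.1
  have hu := hrec _ (isMinSol_sol (fun i j : {i : E // i ≠ o} => embed q i.1 j.1)
    (fun i => embed q i.1 o))
  have hle := sol_le_super hsuper
  intro i
  by_cases hio : i = o
  · subst hio; exact le_rfl
  have h1 : (1 : ℝ≥0∞) ≤ min (w i / w o) 1 := by
    have h0 := hle ⟨i, hio⟩
    rw [hu ⟨i, hio⟩] at h0
    exact h0
  have h2 : (1 : ℝ≥0∞) ≤ w i / w o := le_trans h1 (min_le_left _ _)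
  calc w o = 1 * w o := (one_mul _).symm
    _ ≤ w i := (ENNReal.le_div_iff_mul_le (Or.inl hwo) (Or.inl hwot)).1 h2

lemma subharm_eq_at (hq : IsQMatrix q) (hirr : MatIrreducible q) {o : E} {t : E → ℝ≥0∞}
    (h1 : ∀ i, t i ≤ 1) (hto : ∀ i, t i ≤ t o)
    (hsub : ∀ i, t i ≤ ∑' j, embed q i j * t j) : ∀ i, t i = t o := by
  have step : ∀ i j, t i = t o → 0 < q i j → t j = t o := by
    intro i j hi hqij
    have hPt : ∑' k, embed q i k * t k = ∑' k, embed q i k * t o := by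
      refine le_antisymm (ENNReal.tsum_le_tsum fun k => mul_le_mul' le_rfl (hto k)) ?_
      have : ∑' k, embed q i k * t o = t o := by
        rw [ENNReal.tsum_mul_right, embed_row_sum hq i, one_mul]
      rw [this, ← hi]
      exact hsub i
    have hfin : ∑' k, embed q i k * t k ≠ ⊤ := by
      rw [hPt, ENNReal.tsum_mul_right, embed_row_sum hq i, one_mul]
      exact ((h1 o).trans_lt ENNReal.one_lt_top).ne
    have hzero : ∑' k, (embed q i k * t o - embed q i k * t k) = 0 := by
      rw [tsum_sub' hfin fun k => mul_le_mul' le_rfl (hto k), hPt, tsub_self]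
    have hterm := (ENNReal.tsum_eq_zero.1 hzero) j
    have hle : embed q i j * t o ≤ embed q i j * t j := tsub_eq_zero_iff_le.1 hterm
    have hpos := embed_pos hq hqij
    have := (ENNReal.mul_le_mul_iff_right hpos.ne' (embed_ne_top hq i j)).1 hle
    exact le_antisymm (hto j) (hi ▸ this)
  have key : ∀ i, Relation.TransGen (fun a b => 0 < q a b) o i → t i = t o := by
    intro i htr
    induction htr with
    | single h => exact step _ _ rfl h
    | tail _ h ih => exact step _ _ ih h
  intro i
  by_cases hio : i = o
  · rw [hio]
  · exact key i (hirr o i (Ne.symm hio))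

end Rec

section Hit
variable {E : Type*} {q : E → E → ℝ}

def kerA {E : Type*} (q : E → E → ℝ) (H : Set E) : E → E → ℝ≥0∞ :=
  fun i j => if j ∈ H then 0 else embed q i j

def pHit {E : Type*} (q : E → E → ℝ) (H : Set E) : E → ℝ≥0∞ :=
  fun i => ∑' j, if j ∈ H then embed q i j else 0

def hitP {E : Type*} (q : E → E → ℝ) (H : Set E) : E → ℝ≥0∞ := sol (kerA q H) (pHit q H)

lemma kerA_le_embed (H : Set E) (i j : E) : kerA q H i j ≤ embed q i j := by
  by_cases h : j ∈ H <;> simp [kerA, h]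

lemma kerA_ne_top (hq : IsQMatrix q) (H : Set E) (i j : E) : kerA q H i j ≠ ⊤ :=
  (lt_of_le_of_lt ((kerA_le_embed H i j).trans (embed_le_one hq i j))
    ENNReal.one_lt_top).ne

lemma one_super (hq : IsQMatrix q) (H : Set E) (i : E) :
    (∑' j, kerA q H i j * (1 : ℝ≥0∞)) + pHit q H i ≤ 1 := by
  simp_rw [mul_one]
  exact (row_split hq H i).le

lemma hitP_le_one (hq : IsQMatrix q) (H : Set E) : ∀ i, hitP q H i ≤ 1 :=
  sol_le_super fun i => one_super hq H i

lemma hitP_ne_top (hq : IsQMatrix q) (H : Set E) (i : E) : hitP q H i ≠ ⊤ :=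
  ((hitP_le_one hq H i).trans_lt ENNReal.one_lt_top).ne

lemma hitP_superharm (hq : IsQMatrix q) (H : Set E) (i : E) :
    (∑' j, embed q i j * hitP q H j) ≤ hitP q H i := by
  have split : ∀ j, embed q i j * hitP q H j
      = kerA q H i j * hitP q H j + (if j ∈ H then embed q i j * hitP q H j else 0) := by
    intro j
    by_cases h : j ∈ H <;> simp [kerA, h]
  calc ∑' j, embed q i j * hitP q H j
      = (∑' j, kerA q H i j * hitP q H j)
        + ∑' j, (if j ∈ H then embed q i j * hitP q H j else 0) := by
        rw [← ENNReal.tsum_add]; exact tsum_congr split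
    _ ≤ (∑' j, kerA q H i j * hitP q H j) + pHit q H i := by
        refine add_le_add le_rfl (ENNReal.tsum_le_tsum fun j => ?_)
        by_cases h : j ∈ H
        · simp only [h, if_true]
          calc embed q i j * hitP q H j ≤ embed q i j * 1 :=
                mul_le_mul' le_rfl (hitP_le_one hq H j)
            _ = embed q i j := mul_one _
        · simp [h]
    _ = hitP q H i := (sol_eq _ _ i).symm

lemma sub_killed (hq : IsQMatrix q) (H : Set E) {x : E → ℝ≥0∞} (hx1 : ∀ j, x j ≤ 1) (i : E) :
    ∑' j, kerA q H i j * (1 - x j)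
      = (∑' j, kerA q H i j) - ∑' j, kerA q H i j * x j := by
  have hterm : ∀ j, kerA q H i j * (1 - x j) = kerA q H i j * 1 - kerA q H i j * x j :=
    fun j => ENNReal.mul_sub fun _ _ => kerA_ne_top hq H i j
  simp_rw [hterm, mul_one]
  refine tsum_sub' ?_ fun j => le_trans (mul_le_mul' le_rfl (hx1 j)) (mul_one _).le
  refine ne_top_of_le_ne_top ENNReal.one_ne_top ?_
  refine le_trans (ENNReal.tsum_le_tsum fun j => ?_) (killed_row_le_one hq H i)
  exact le_trans (mul_le_mul' le_rfl (hx1 j)) (mul_one _).le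

lemma killed_sum_le_one (hq : IsQMatrix q) (H : Set E) (i : E) :
    ∑' j, kerA q H i j ≤ 1 := killed_row_le_one hq H i

lemma hitP_killed_harm (hq : IsQMatrix q) (H : Set E) (i : E) :
    1 - hitP q H i = ∑' j, kerA q H i j * (1 - hitP q H j) := by
  refine (ENNReal.eq_sub_of_add_eq (hitP_ne_top hq H i) ?_).symm
  rw [sub_killed hq H (hitP_le_one hq H) i]
  conv_lhs => rw [show hitP q H i = (∑' j, kerA q H i j * hitP q H j) + pHit q H i from
    sol_eq _ _ i]
  have hle : (∑' j, kerA q H i j * hitP q H j) ≤ ∑' j, kerA q H i j := by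
    refine ENNReal.tsum_le_tsum fun j => ?_
    calc kerA q H i j * hitP q H j ≤ kerA q H i j * 1 :=
          mul_le_mul' le_rfl (hitP_le_one hq H j)
      _ = kerA q H i j := mul_one _
  rw [← add_assoc, tsub_add_cancel_of_le hle]
  exact row_split hq H i

lemma pHit_pos_somewhere (hq : IsQMatrix q) (hirr : MatIrreducible q) {H : Set E}
    (hHne : H.Nonempty) : ∃ k, 0 < pHit q H k := by
  obtain ⟨h0, hh0⟩ := hHne
  obtain ⟨j0, hj0ne, hj0⟩ := exists_offdiag_pos hq h0
  obtain ⟨k, -, hk⟩ := Relation.TransGen.tail'_iff.1 (hirr j0 h0 hj0ne)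
  refine ⟨k, lt_of_lt_of_le ?_ (ENNReal.le_tsum h0)⟩
  simp only [hh0, if_true]
  exact embed_pos hq hk

lemma hitP_eq_one (hq : IsQMatrix q) (hirr : MatIrreducible q)
    (hrec : MatRecurrent (embed q)) {H : Set E} (hHne : H.Nonempty) :
    ∀ i, hitP q H i = 1 := by
  obtain ⟨o, hro⟩ := hrec
  have hmin : ∀ i, hitP q H o ≤ hitP q H i :=
    superharm_min_at hq hro (hitP_le_one hq H) (hitP_superharm hq H)
  set t : E → ℝ≥0∞ := fun i => 1 - hitP q H i with ht
  have ht1 : ∀ i, t i ≤ 1 := fun i => tsub_le_self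
  have hto : ∀ i, t i ≤ t o := fun i => tsub_le_tsub_left (hmin i) 1
  have hsub : ∀ i, t i ≤ ∑' j, embed q i j * t j := by
    intro i
    show 1 - hitP q H i ≤ ∑' j, embed q i j * (1 - hitP q H j)
    rw [hitP_killed_harm hq H i]
    exact ENNReal.tsum_le_tsum fun j => mul_le_mul' (kerA_le_embed H i j) le_rfl
  have hconst := subharm_eq_at hq hirr ht1 hto hsub
  obtain ⟨k, hk⟩ := pHit_pos_somewhere hq hirr hHne
  have hc0 : t o = 0 := by
    by_contra hc
    have htne : t o ≠ ⊤ := ((ht1 o).trans_lt ENNReal.one_lt_top).ne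
    have hkt : t o = (∑' j, kerA q H k j) * t o := by
      have h1 : t k = ∑' j, kerA q H k j * t j := hitP_killed_harm hq H k
      have hkt2 : t k = (∑' j, kerA q H k j) * t o := by
        rw [h1, show (∑' j, kerA q H k j * t j) = ∑' j, kerA q H k j * t o from
          tsum_congr fun j => by rw [hconst j]]
        exact ENNReal.tsum_mul_right
      conv_lhs => rw [← hconst k]
      exact hkt2
    have hSne : (∑' j, kerA q H k j) ≠ 1 := by
      intro h1
      have hrs := row_split hq H k
      rw [show (∑' j, if j ∈ H then (0:ℝ≥0∞) else embed q k j) = ∑' j, kerA q H k j from rfl,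
        h1] at hrs
      have h2 : (1:ℝ≥0∞) + pHit q H k = 1 + 0 := by rw [add_zero]; exact hrs
      exact hk.ne' ((ENNReal.add_right_inj ENNReal.one_ne_top).1 h2)
    have hSlt : (∑' j, kerA q H k j) < 1 := lt_of_le_of_ne (killed_sum_le_one hq H k) hSne
    have := ENNReal.mul_lt_mul_left hc htne hSlt
    rw [one_mul, ← hkt] at this
    exact lt_irrefl _ this
  have : ∀ i, t i = 0 := fun i => by rw [hconst i, hc0]
  intro i
  have hti := this i
  rw [ht] at hti
  simp only at hti
  exact le_antisymm (hitP_le_one hq H i) (tsub_eq_zero_iff_le.1 hti)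

end Hit

section ERealHelp
variable {ι : Type*}

lemma coe_ennreal_eq {a : ℝ≥0∞} (ha : a ≠ ⊤) : (a : EReal) = ((a.toReal : ℝ) : EReal) := by
  conv_lhs => rw [← ENNReal.ofReal_toReal ha]
  rw [EReal.coe_ennreal_ofReal, max_eq_left ENNReal.toReal_nonneg]

lemma ereal_tsum_le {f : ι → EReal} {X : EReal} (h0 : 0 ≤ X)
    (hT : ∀ T : Finset ι, ∑ j ∈ T, f j ≤ X) : ∑' j, f j ≤ X := by
  by_cases hsum : Summable f
  · exact le_of_tendsto hsum.hasSum (Filter.Eventually.of_forall hT)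
  · rw [tsum_eq_zero_of_not_summable hsum]; exact h0

lemma ereal_coe_finset_sum (T : Finset ι) (r : ι → ℝ) :
    ((∑ j ∈ T, r j : ℝ) : EReal) = ∑ j ∈ T, ((r j : ℝ) : EReal) :=
  map_sum (⟨⟨Real.toEReal, EReal.coe_zero⟩, EReal.coe_add⟩ : ℝ →+ EReal) _ _

lemma ereal_le_tsum_bound {f : ι → EReal} {x : ι → ℝ≥0∞}
    (hx : ∑' j, x j ≠ ⊤) (hfx : ∀ j, f j ≤ (((x j).toReal : ℝ) : EReal)) :
    ∑' j, f j ≤ (((∑' j, x j).toReal : ℝ) : EReal) := by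
  refine ereal_tsum_le (EReal.coe_nonneg.2 ENNReal.toReal_nonneg) fun T => ?_
  calc ∑ j ∈ T, f j ≤ ∑ j ∈ T, (((x j).toReal : ℝ) : EReal) :=
        Finset.sum_le_sum fun j _ => hfx j
    _ = ((∑ j ∈ T, (x j).toReal : ℝ) : EReal) := (ereal_coe_finset_sum T _).symm
    _ ≤ (((∑' j, x j).toReal : ℝ) : EReal) := by
        rw [EReal.coe_le_coe_iff, ← ENNReal.toReal_sum
          fun a _ => ne_top_of_le_ne_top hx (ENNReal.le_tsum a)]
        exact ENNReal.toReal_mono hx (ENNReal.sum_le_tsum T)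

end ERealHelp

section Backward
variable {E : Type*} {q : E → E → ℝ}

lemma gfin (hq : IsQMatrix q) (i : E) : (ENNReal.ofReal (-q i i))⁻¹ ≠ ⊤ :=
  ENNReal.inv_ne_top.2 (ENNReal.ofReal_pos.2 (hq.diag_neg i)).ne'

lemma gtoReal (hq : IsQMatrix q) (i : E) :
    ((ENNReal.ofReal (-q i i))⁻¹).toReal = 1 / (-q i i) := by
  rw [ENNReal.toReal_inv, ENNReal.toReal_ofReal (hq.diag_neg i).le, one_div]

lemma backward_le (hq : IsQMatrix q) (hirr : MatIrreducible q)
    (hrec : MatRecurrent (embed q)) {H : Set E} (hHne : H.Nonempty)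
    {m : E → ℝ≥0∞}
    (hm : IsMinSol (kerA q H) (fun i => (ENNReal.ofReal (-q i i))⁻¹) m)
    (hfin : ∀ i, m i ≠ ⊤)
    {y : E → ℝ} (hbd : BddAbove (Set.range y))
    (hy : ∀ i : E, (y i : EReal) ≤
      (∑' j : E, if j ∈ H then 0 else (embed q i j : EReal) * (y j : EReal))
        + ((1 / (-q i i) : ℝ) : EReal)) :
    ∀ i, y i ≤ (m i).toReal := by
  obtain ⟨u, hu⟩ := hbd
  set c : ℝ := max u 0 with hc
  have hc0 : 0 ≤ c := le_max_right u 0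
  have hyc : ∀ i, y i ≤ c := fun i => le_trans (hu ⟨i, rfl⟩) (le_max_left u 0)
  set D : ℕ → E → ℝ≥0∞ := fun k i => 1 - psum (kerA q H) (pHit q H) k i with hD
  have hpsle : ∀ k i, psum (kerA q H) (pHit q H) k i ≤ 1 := fun k i => by
    refine le_trans ?_ (hitP_le_one hq H i)
    rw [hitP, sol_eq_iSup_psum]
    exact le_iSup (fun k => psum (kerA q H) (pHit q H) k i) k
  have hD1 : ∀ k i, D k i ≤ 1 := fun k i => tsub_le_self
  have hDne : ∀ k i, D k i ≠ ⊤ := fun k i =>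
    ne_top_of_le_ne_top ENNReal.one_ne_top (hD1 k i)
  have hDrec : ∀ k i, ∑' j, kerA q H i j * D k j = D (k + 1) i := by
    intro k i
    have h1 : ∑' j, kerA q H i j * D k j
        = (∑' j, kerA q H i j) - ∑' j, kerA q H i j * psum (kerA q H) (pHit q H) k j :=
      sub_killed hq H (fun j => hpsle k j) i
    have hAhk : (∑' j, kerA q H i j * psum (kerA q H) (pHit q H) k j)
        ≤ ∑' j, kerA q H i j :=
      ENNReal.tsum_le_tsum fun j => le_trans (mul_le_mul' le_rfl (hpsle k j)) (mul_one _).le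
    have h2 : (∑' j, kerA q H i j * D k j) + psum (kerA q H) (pHit q H) (k+1) i = 1 := by
      rw [h1, psum_succ, ← add_assoc, tsub_add_cancel_of_le hAhk]
      exact row_split hq H i
    exact ENNReal.eq_sub_of_add_eq
      (ne_top_of_le_ne_top ENNReal.one_ne_top (hpsle (k+1) i)) h2
  have main : ∀ k i, (y i : EReal)
      ≤ (((m i + ENNReal.ofReal c * D k i).toReal : ℝ) : EReal) := by
    intro k
    induction k with
    | zero =>
      intro i
      have hD0 : D 0 i = 1 := by simp [hD, psum]
      rw [hD0, mul_one, ENNReal.toReal_add (hfin i) ENNReal.ofReal_ne_top,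
        ENNReal.toReal_ofReal hc0, EReal.coe_le_coe_iff]
      have := ENNReal.toReal_nonneg (a := m i)
      have := hyc i
      linarith
    | succ k ih =>
      intro i
      have hAm : (∑' j, kerA q H i j * m j) ≠ ⊤ := by
        refine ne_top_of_le_ne_top (hfin i) ?_
        rw [hm.1 i]; exact le_self_add
      have hAD : (∑' j, kerA q H i j * D k j) ≠ ⊤ := by
        refine ne_top_of_le_ne_top ENNReal.one_ne_top ?_
        refine le_trans (ENNReal.tsum_le_tsum fun j =>
          le_trans (mul_le_mul' le_rfl (hD1 k j)) (mul_one _).le) (killed_sum_le_one hq H i)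
      set x : E → ℝ≥0∞ := fun j => kerA q H i j * (m j + ENNReal.ofReal c * D k j) with hx
      have hxsum : ∑' j, x j = (∑' j, kerA q H i j * m j)
          + ENNReal.ofReal c * ∑' j, kerA q H i j * D k j := by
        rw [← ENNReal.tsum_mul_left, ← ENNReal.tsum_add]
        exact tsum_congr fun j => by rw [hx]; ring
      have hxne : ∑' j, x j ≠ ⊤ := by
        rw [hxsum]
        exact ENNReal.add_ne_top.2 ⟨hAm, ENNReal.mul_ne_top ENNReal.ofReal_ne_top hAD⟩
      have hterm : ∀ j, (if j ∈ H then 0 else (embed q i j : EReal) * (y j : EReal))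
          ≤ (((x j).toReal : ℝ) : EReal) := by
        intro j
        by_cases hj : j ∈ H
        · simp only [hj, if_true]
          refine EReal.coe_nonneg.2 ENNReal.toReal_nonneg
        · simp only [hj, if_false]
          have hker : kerA q H i j = embed q i j := by simp [kerA, hj]
          rw [coe_ennreal_eq (embed_ne_top hq i j), ← EReal.coe_mul, EReal.coe_le_coe_iff,
            hx]
          simp only
          rw [hker, ENNReal.toReal_mul]
          refine mul_le_mul_of_nonneg_left ?_ ENNReal.toReal_nonneg
          exact EReal.coe_le_coe_iff.1 (ih j)
      have hT := ereal_le_tsum_bound hxne hterm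
      have hfinal : (∑' j, x j) + (ENNReal.ofReal (-q i i))⁻¹
          = m i + ENNReal.ofReal c * D (k+1) i := by
        rw [hxsum, hDrec k i, add_right_comm, ← hm.1 i]
      calc (y i : EReal)
          ≤ (∑' j : E, if j ∈ H then 0 else (embed q i j : EReal) * (y j : EReal))
            + ((1 / (-q i i) : ℝ) : EReal) := hy i
        _ ≤ ((((∑' j, x j).toReal : ℝ)) : EReal) + ((1 / (-q i i) : ℝ) : EReal) :=
            add_le_add hT le_rfl
        _ = (((∑' j, x j).toReal + 1 / (-q i i) : ℝ) : EReal) := (EReal.coe_add _ _).symm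
        _ = (((m i + ENNReal.ofReal c * D (k+1) i).toReal : ℝ) : EReal) := by
            rw [← gtoReal hq i, ← ENNReal.toReal_add hxne (gfin hq i), hfinal]
  intro i
  refine le_of_forall_pos_le_add fun ε hε => ?_
  set δ : ℝ := ε / (c + 1) with hδ
  have hδ0 : 0 < δ := div_pos hε (by linarith)
  have hsup : (⨆ k, psum (kerA q H) (pHit q H) k i) = 1 := by
    rw [← sol_eq_iSup_psum (kerA q H) (pHit q H) i]
    exact hitP_eq_one hq hirr hrec hHne i
  obtain ⟨k, hDk⟩ : ∃ k, D k i ≤ ENNReal.ofReal δ := by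
    by_cases hδ1 : (1:ℝ≥0∞) ≤ ENNReal.ofReal δ
    · exact ⟨0, le_trans (hD1 0 i) hδ1⟩
    push_neg at hδ1
    have h1 : (1:ℝ≥0∞) - ENNReal.ofReal δ < ⨆ k, psum (kerA q H) (pHit q H) k i := by
      rw [hsup]
      exact ENNReal.sub_lt_self ENNReal.one_ne_top one_ne_zero
        (ENNReal.ofReal_pos.2 hδ0).ne'
    obtain ⟨k, hk⟩ := lt_iSup_iff.1 h1
    refine ⟨k, ?_⟩
    rw [hD]
    simp only
    rw [tsub_le_iff_right]
    calc (1:ℝ≥0∞) = (1 - ENNReal.ofReal δ) + ENNReal.ofReal δ :=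
          (tsub_add_cancel_of_le hδ1.le).symm
      _ ≤ ENNReal.ofReal δ + psum (kerA q H) (pHit q H) k i := by
          rw [add_comm]; exact add_le_add le_rfl hk.le
  have hyk := main k i
  rw [EReal.coe_le_coe_iff, ENNReal.toReal_add (hfin i)
    (ENNReal.mul_ne_top ENNReal.ofReal_ne_top (hDne k i)), ENNReal.toReal_mul,
    ENNReal.toReal_ofReal hc0] at hyk
  have hDkr : (D k i).toReal ≤ δ := by
    have := ENNReal.toReal_mono ENNReal.ofReal_ne_top hDk
    rwa [ENNReal.toReal_ofReal hδ0.le] at this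
  have hcδ : c * (D k i).toReal ≤ ε := by
    have h2 : c * (D k i).toReal ≤ c * δ := mul_le_mul_of_nonneg_left hDkr hc0
    have h3 : c * δ ≤ (c + 1) * δ := by nlinarith
    have h4 : (c + 1) * δ = ε := by
      rw [hδ]; field_simp
    linarith
  linarith
end Backward

section Forward
variable {E : Type*} {q : E → E → ℝ}

lemma mtop_step (hq : IsQMatrix q) {H : Set E} {m : E → ℝ≥0∞}
    (hm : ∀ i, m i = (∑' j, kerA q H i j * m j) + (ENNReal.ofReal (-q i i))⁻¹)
    {j : E} (hjH : j ∉ H) (hjt : m j = ⊤) {i : E} (hij : 0 < q i j) : m i = ⊤ := by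
  have h1 : kerA q H i j * m j = ⊤ := by
    rw [hjt, ENNReal.mul_top]
    simp only [kerA, hjH, if_false]
    exact (embed_pos hq hij).ne'
  refine top_unique ?_
  rw [hm i, ← h1]
  exact le_trans (ENNReal.le_tsum j) le_self_add

lemma mtop_in_H (hq : IsQMatrix q) (hirr : MatIrreducible q) {H : Set E}
    (hHne : H.Nonempty) {m : E → ℝ≥0∞}
    (hm : ∀ i, m i = (∑' j, kerA q H i j * m j) + (ENNReal.ofReal (-q i i))⁻¹)
    (htop : ∃ i, m i = ⊤) : ∃ i ∈ H, m i = ⊤ := by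
  obtain ⟨i0, hi0⟩ := htop
  by_cases hi0H : i0 ∈ H
  · exact ⟨i0, hi0H, hi0⟩
  obtain ⟨h0, hh0⟩ := hHne
  have hne : h0 ≠ i0 := fun h => hi0H (h ▸ hh0)
  have htr := hirr h0 i0 hne
  have key : (∃ h ∈ H, m h = ⊤) ∨ m h0 = ⊤ := by
    refine Relation.TransGen.head_induction_on htr ?_ ?_
    · intro a ha
      exact Or.inr (mtop_step hq hm hi0H hi0 ha)
    · intro a c hac _ ih
      rcases ih with h | h
      · exact Or.inl h
      · by_cases hcH : c ∈ H
        · exact Or.inl ⟨c, hcH, h⟩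
        · exact Or.inr (mtop_step hq hm hcH h hac)
  rcases key with h | h
  · exact h
  · exact ⟨h0, hh0, h⟩

/-- truncated kernel -/
def trA {E : Type*} (q : E → E → ℝ) (H K : Set E) : E → E → ℝ≥0∞ :=
  fun i j => if i ∈ K ∧ j ∈ K ∧ j ∉ H then embed q i j else 0

/-- truncated inhomogeneity -/
def trg {E : Type*} (q : E → E → ℝ) (K : Set E) : E → ℝ≥0∞ :=
  fun i => if i ∈ K then (ENNReal.ofReal (-q i i))⁻¹ else 0

lemma trA_le_kerA {H K : Set E} (hHK : True) (i j : E) : trA q H K i j ≤ kerA q H i j := by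
  by_cases h : i ∈ K ∧ j ∈ K ∧ j ∉ H
  · rw [trA, if_pos h, kerA, if_neg h.2.2]
  · rw [trA, if_neg h]; exact zero_le

lemma trA_le_embed {H K : Set E} (i j : E) : trA q H K i j ≤ embed q i j :=
  le_trans (trA_le_kerA trivial i j) (kerA_le_embed H i j)

lemma trg_le_g {K : Set E} (i : E) : trg q K i ≤ (ENNReal.ofReal (-q i i))⁻¹ := by
  rw [trg]; split <;> simp

lemma trA_mono {H : Set E} {K K' : Set E} (hKK : K ⊆ K') (i j : E) :
    trA q H K i j ≤ trA q H K' i j := by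
  by_cases h : i ∈ K ∧ j ∈ K ∧ j ∉ H
  · rw [trA, if_pos h, trA, if_pos ⟨hKK h.1, hKK h.2.1, h.2.2⟩]
  · rw [trA, if_neg h]; exact zero_le

lemma trg_mono {K K' : Set E} (hKK : K ⊆ K') (i : E) : trg q K i ≤ trg q K' i := by
  by_cases h : i ∈ K
  · rw [trg, if_pos h, trg, if_pos (hKK h)]
  · rw [trg, if_neg h]; exact zero_le

lemma trA_iSup {H : Set E} {K : ℕ → Set E} (hmono : Monotone K)
    (hcover : ∀ i, ∃ n, i ∈ K n) (i j : E) :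
    (⨆ n, trA q H (K n) i j) = kerA q H i j := by
  refine le_antisymm (iSup_le fun n => trA_le_kerA trivial i j) ?_
  by_cases hj : j ∈ H
  · rw [kerA, if_pos hj]; exact zero_le
  obtain ⟨n1, hn1⟩ := hcover i
  obtain ⟨n2, hn2⟩ := hcover j
  refine le_iSup_of_le (max n1 n2) ?_
  rw [kerA, if_neg hj, trA,
    if_pos ⟨hmono (le_max_left n1 n2) hn1, hmono (le_max_right n1 n2) hn2, hj⟩]

lemma trg_iSup {K : ℕ → Set E} (hmono : Monotone K) (hcover : ∀ i, ∃ n, i ∈ K n) (i : E) :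
    (⨆ n, trg q (K n) i) = (ENNReal.ofReal (-q i i))⁻¹ := by
  refine le_antisymm (iSup_le fun n => trg_le_g i) ?_
  obtain ⟨n1, hn1⟩ := hcover i
  exact le_iSup_of_le n1 (by rw [trg, if_pos hn1])

lemma trSol_zero_off {H K : Set E} {i : E} (hi : i ∉ K) : sol (trA q H K) (trg q K) i = 0 := by
  have h0 : ∀ l, itr (trA q H K) (trg q K) l i = 0 := by
    intro l
    cases l with
    | zero => exact if_neg hi
    | succ l =>
      show (∑' j, trA q H K i j * itr (trA q H K) (trg q K) l j) = 0
      rw [ENNReal.tsum_eq_zero]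
      intro j
      rw [trA, if_neg (fun h => hi h.1), zero_mul]
  rw [sol]
  rw [ENNReal.tsum_eq_zero]
  exact h0

lemma trSol_le_m {H : Set E} {K : Set E} {m : E → ℝ≥0∞}
    (hm : ∀ i, m i = (∑' j, kerA q H i j * m j) + (ENNReal.ofReal (-q i i))⁻¹) (i : E) :
    sol (trA q H K) (trg q K) i ≤ m i := by
  refine sol_le_super (fun i => ?_) i
  rw [hm i]
  refine add_le_add (ENNReal.tsum_le_tsum fun j =>
    mul_le_mul' (trA_le_kerA trivial i j) le_rfl) (trg_le_g i)

lemma trSol_iSup {H : Set E} {K : ℕ → Set E} (hmono : Monotone K)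
    (hcover : ∀ i, ∃ n, i ∈ K n) (i : E) :
    (⨆ n, sol (trA q H (K n)) (trg q (K n)) i)
      = sol (kerA q H) (fun i => (ENNReal.ofReal (-q i i))⁻¹) i := by
  have h := sol_iSup (An := fun n => trA q H (K n)) (gn := fun n => trg q (K n))
    (fun i j n n' hnn => trA_mono (hmono hnn) i j)
    (fun i n n' hnn => trg_mono (hmono hnn) i) i
  rw [← h]
  congr 1
  · funext i j
    exact trA_iSup hmono hcover i j
  · funext i
    exact trg_iSup hmono hcover i

end Forward

section Finiteness
variable {E : Type*} {q : E → E → ℝ}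

lemma lt_one_of_add_eq_one {a b : ℝ≥0∞} (h : a + b = 1) (hb : b ≠ 0) : a < 1 := by
  refine lt_of_le_of_ne (le_trans le_self_add h.le) fun ha => hb ?_
  rw [ha] at h
  have h2 : (1:ℝ≥0∞) + b = 1 + 0 := by rw [add_zero]; exact h
  exact (ENNReal.add_right_inj ENNReal.one_ne_top).1 h2

lemma ite_row_split (hq : IsQMatrix q) (i e : E) :
    (∑' j, if j = e then (0:ℝ≥0∞) else embed q i j) + embed q i e = 1 := by
  rw [add_comm, ← ENNReal.tsum_eq_add_tsum_ite e]
  exact embed_row_sum hq i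

lemma itr_one_le_one (hq : IsQMatrix q) {H K : Set E} :
    ∀ l i, itr (trA q H K) (fun _ => (1:ℝ≥0∞)) l i ≤ 1 := by
  intro l
  induction l with
  | zero => intro i; exact le_rfl
  | succ l ih =>
    intro i
    show (∑' j, trA q H K i j * itr (trA q H K) (fun _ => (1:ℝ≥0∞)) l j) ≤ 1
    refine le_trans (ENNReal.tsum_le_tsum fun j => ?_) (embed_row_sum hq i).le
    exact le_trans (mul_le_mul' (trA_le_embed i j) (ih j)) (mul_one _).le

lemma itr_one_anti (hq : IsQMatrix q) {H K : Set E} (i : E) :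
    Antitone fun l => itr (trA q H K) (fun _ => (1:ℝ≥0∞)) l i := by
  have hsucc : ∀ l i, itr (trA q H K) (fun _ => (1:ℝ≥0∞)) (l+1) i
      ≤ itr (trA q H K) (fun _ => (1:ℝ≥0∞)) l i := by
    intro l
    induction l with
    | zero => intro i; exact itr_one_le_one hq 1 i
    | succ l ih =>
      intro i
      exact ENNReal.tsum_le_tsum fun j => mul_le_mul' le_rfl (ih j)
  exact antitone_nat_of_succ_le fun l => hsucc l i

lemma exit_base (hq : IsQMatrix q) {H K : Set E} {i e : E} (hie : 0 < q i e)
    (he : e ∈ H ∨ e ∉ K) : itr (trA q H K) (fun _ => (1:ℝ≥0∞)) 1 i < 1 := by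
  have hBe : trA q H K i e = 0 := by
    rw [trA, if_neg]
    rintro ⟨-, heK, heH⟩
    rcases he with h | h
    · exact heH h
    · exact h heK
  have hle : itr (trA q H K) (fun _ => (1:ℝ≥0∞)) 1 i
      ≤ ∑' j, if j = e then (0:ℝ≥0∞) else embed q i j := by
    refine ENNReal.tsum_le_tsum fun j => ?_
    by_cases hj : j = e
    · subst hj; rw [if_pos rfl, hBe, zero_mul]
    · rw [if_neg hj]
      exact le_trans (mul_le_mul' (trA_le_embed i j) le_rfl) (mul_one _).le
  exact lt_of_le_of_lt hle
    (lt_one_of_add_eq_one (ite_row_split hq i e) (embed_pos hq hie).ne')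

lemma exit_head (hq : IsQMatrix q) {H K : Set E} {i b : E} (hib : 0 < q i b)
    (hiK : i ∈ K) (hbK : b ∈ K) (hbH : b ∉ H) {L : ℕ}
    (hb : itr (trA q H K) (fun _ => (1:ℝ≥0∞)) L b < 1) :
    itr (trA q H K) (fun _ => (1:ℝ≥0∞)) (L+1) i < 1 := by
  set r := fun l i => itr (trA q H K) (fun _ => (1:ℝ≥0∞)) l i with hr
  have hsplit : (∑' j, trA q H K i j * r L j)
      = trA q H K i b * r L b + ∑' j, if j = b then 0 else trA q H K i j * r L j :=
    ENNReal.tsum_eq_add_tsum_ite b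
  have h1 : (∑' j, if j = b then (0:ℝ≥0∞) else trA q H K i j * r L j)
      ≤ ∑' j, if j = b then (0:ℝ≥0∞) else embed q i j := by
    refine ENNReal.tsum_le_tsum fun j => ?_
    by_cases hj : j = b
    · simp [hj]
    · rw [if_neg hj, if_neg hj]
      exact le_trans (mul_le_mul' (trA_le_embed i j) (itr_one_le_one hq L j))
        (mul_one _).le
  have hBb : trA q H K i b = embed q i b := by
    rw [trA, if_pos ⟨hiK, hbK, hbH⟩]
  have hlt : trA q H K i b * r L b < embed q i b := by
    rw [hBb]
    calc embed q i b * r L b < embed q i b * 1 :=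
          ENNReal.mul_lt_mul_right (embed_pos hq hib).ne' (embed_ne_top hq i b) hb
      _ = embed q i b := mul_one _
  calc itr (trA q H K) (fun _ => (1:ℝ≥0∞)) (L+1) i
      = trA q H K i b * r L b + ∑' j, if j = b then 0 else trA q H K i j * r L j := hsplit
    _ ≤ trA q H K i b * r L b + ∑' j, if j = b then (0:ℝ≥0∞) else embed q i j :=
        add_le_add le_rfl h1
    _ < embed q i b + ∑' j, if j = b then (0:ℝ≥0∞) else embed q i j := by
        refine ENNReal.add_lt_add_right ?_ hlt
        refine ne_top_of_le_ne_top ENNReal.one_ne_top ?_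
        rw [← ite_row_split hq i b]
        exact le_self_add
    _ = 1 := by rw [add_comm]; exact ite_row_split hq i b

lemma exit_exists (hq : IsQMatrix q) (hirr : MatIrreducible q) {H K : Set E}
    (hHne : H.Nonempty) : ∀ i ∈ K, ∃ L, 1 ≤ L ∧
      itr (trA q H K) (fun _ => (1:ℝ≥0∞)) L i < 1 := by
  have claim : ∀ e, (e ∈ H ∨ e ∉ K) → ∀ i, Relation.TransGen (fun a b => 0 < q a b) i e →
      i ∈ K → ∃ L, 1 ≤ L ∧ itr (trA q H K) (fun _ => (1:ℝ≥0∞)) L i < 1 := by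
    intro e he i htr
    refine Relation.TransGen.head_induction_on htr ?_ ?_
    · intro a ha _
      exact ⟨1, le_rfl, exit_base hq ha he⟩
    · intro a c hac _ ih haK
      by_cases hc : c ∈ H ∨ c ∉ K
      · exact ⟨1, le_rfl, exit_base hq hac hc⟩
      · push_neg at hc
        obtain ⟨L, hL1, hL⟩ := ih hc.2
        exact ⟨L + 1, le_trans hL1 (Nat.le_succ L), exit_head hq hac haK hc.2 hc.1 hL⟩
  intro i hiK
  obtain ⟨h0, hh0⟩ := hHne
  by_cases hih : i = h0
  · subst hih
    obtain ⟨j, hjne, hj⟩ := exists_offdiag_pos hq i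
    exact claim i (Or.inl hh0) i
      (Relation.TransGen.trans (Relation.TransGen.single (r := fun a b => 0 < q a b) hj)
        (hirr j i hjne)) hiK
  · exact claim h0 (Or.inl hh0) i (hirr i h0 hih) hiK

lemma trSol_ne_top (hq : IsQMatrix q) (hirr : MatIrreducible q) {H K : Set E}
    (hHne : H.Nonempty) (hKfin : K.Finite) (i : E) :
    sol (trA q H K) (trg q K) i ≠ ⊤ := by
  classical
  set one : E → ℝ≥0∞ := fun _ => 1 with hone
  set KF := hKfin.toFinset with hKF
  -- choose exit lengths
  have hLex := exit_exists hq hirr (K := K) hHne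
  choose! L hL1 hL2 using hLex
  set N : ℕ := max (KF.sup L) 1 with hN
  have hN1 : 1 ≤ N := le_max_right _ 1
  have hanti : ∀ j, Antitone fun l => itr (trA q H K) one l j := fun j => itr_one_anti hq j
  have hNlt : ∀ j ∈ K, itr (trA q H K) one N j < 1 := by
    intro j hj
    refine lt_of_le_of_lt (hanti j ?_) (hL2 j hj)
    exact le_max_of_le_left (Finset.le_sup (hKfin.mem_toFinset.2 hj))
  set δ : ℝ≥0∞ := KF.sup fun j => itr (trA q H K) one N j with hδ
  have hδ1 : δ < 1 := by
    rw [hδ]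
    refine Finset.sup_lt_iff (by exact zero_lt_one) |>.2 fun j hj => ?_
    exact hNlt j (hKfin.mem_toFinset.1 hj)
  have hzeroN : ∀ j, j ∉ K → itr (trA q H K) one N j = 0 := by
    intro j hj
    obtain ⟨N', hN'⟩ := Nat.exists_eq_succ_of_ne_zero (by omega : N ≠ 0)
    rw [hN']
    show (∑' k, trA q H K j k * itr (trA q H K) one N' k) = 0
    rw [ENNReal.tsum_eq_zero]
    intro k
    rw [trA, if_neg (fun h => hj h.1), zero_mul]
  have hNδ : ∀ j, itr (trA q H K) one N j ≤ δ := by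
    intro j
    by_cases hj : j ∈ K
    · exact Finset.le_sup (hKfin.mem_toFinset.2 hj)
    · rw [hzeroN j hj]; exact zero_le
  -- shift estimate
  have hshift : ∀ l j, itr (trA q H K) one (l + N) j ≤ itr (trA q H K) one l j * δ := by
    intro l
    induction l with
    | zero =>
      intro j
      rw [Nat.zero_add]
      show itr (trA q H K) one N j ≤ itr (trA q H K) one 0 j * δ
      rw [show itr (trA q H K) one 0 j = 1 from rfl, one_mul]
      exact hNδ j
    | succ l ih =>
      intro j
      rw [Nat.succ_add]
      show (∑' k, trA q H K j k * itr (trA q H K) one (l + N) k) ≤ _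
      calc (∑' k, trA q H K j k * itr (trA q H K) one (l + N) k)
          ≤ ∑' k, trA q H K j k * (itr (trA q H K) one l k * δ) :=
            ENNReal.tsum_le_tsum fun k => mul_le_mul' le_rfl (ih k)
        _ = (∑' k, trA q H K j k * itr (trA q H K) one l k) * δ := by
            simp_rw [← mul_assoc]
            exact ENNReal.tsum_mul_right
        _ = itr (trA q H K) one (l+1) j * δ := rfl
  have hpow : ∀ a j, itr (trA q H K) one (a * N) j ≤ δ ^ a := by
    intro a
    induction a with
    | zero => intro j; rw [Nat.zero_mul, pow_zero]; exact le_rfl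
    | succ a ih =>
      intro j
      rw [Nat.succ_mul, pow_succ]
      exact le_trans (hshift (a * N) j) (mul_le_mul' (ih j) le_rfl)
  have hdiv : ∀ l j, itr (trA q H K) one l j ≤ δ ^ (l / N) := by
    intro l j
    refine le_trans (hanti j (Nat.div_mul_le_self l N)) (hpow (l / N) j)
  -- G bound
  set G : ℝ≥0∞ := KF.sup fun j => (ENNReal.ofReal (-q j j))⁻¹ with hG
  have hGne : G ≠ ⊤ := by
    rw [hG]
    refine ((Finset.sup_lt_iff (by simp : (⊥:ℝ≥0∞) < ⊤)).2 fun j _ => ?_).ne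
    exact (gfin hq j).lt_top
  have hgle : ∀ j, trg q K j ≤ G := by
    intro j
    rw [trg, hG]
    split
    · exact Finset.le_sup (f := fun j => (ENNReal.ofReal (-q j j))⁻¹)
        (hKfin.mem_toFinset.2 (by assumption))
    · exact zero_le
  have hitrg : ∀ l j, itr (trA q H K) (trg q K) l j ≤ G * itr (trA q H K) one l j := by
    intro l
    induction l with
    | zero =>
      intro j
      show trg q K j ≤ G * 1
      rw [mul_one]
      exact hgle j
    | succ l ih =>
      intro j
      show (∑' k, trA q H K j k * itr (trA q H K) (trg q K) l k) ≤ _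
      calc (∑' k, trA q H K j k * itr (trA q H K) (trg q K) l k)
          ≤ ∑' k, trA q H K j k * (G * itr (trA q H K) one l k) :=
            ENNReal.tsum_le_tsum fun k => mul_le_mul' le_rfl (ih k)
        _ = G * ∑' k, trA q H K j k * itr (trA q H K) one l k := by
            rw [← ENNReal.tsum_mul_left]
            exact tsum_congr fun k => by ring
        _ = G * itr (trA q H K) one (l+1) j := rfl
  -- geometric series
  haveI : NeZero N := ⟨by omega⟩
  have hgeom : (∑' l : ℕ, δ ^ (l / N)) = (N : ℝ≥0∞) * (1 - δ)⁻¹ := by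
    have he := Equiv.tsum_eq (Nat.divModEquiv N).symm (fun l => δ ^ (l / N))
    rw [← he]
    have hval : ∀ p : ℕ × Fin N, (((Nat.divModEquiv N).symm p : ℕ)) / N = p.1 := by
      intro p
      show (p.1 * N + (p.2 : ℕ)) / N = p.1
      rw [Nat.add_comm, Nat.mul_comm]
      rw [Nat.add_mul_div_left _ _ (Nat.lt_of_lt_of_le Nat.zero_lt_one hN1),
        Nat.div_eq_of_lt p.2.is_lt, Nat.zero_add]
    have h2 : ∀ p : ℕ × Fin N, δ ^ ((((Nat.divModEquiv N).symm p : ℕ)) / N) = δ ^ p.1 :=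
      fun p => by rw [hval p]
    rw [show (fun p : ℕ × Fin N => δ ^ ((((Nat.divModEquiv N).symm p : ℕ)) / N))
      = fun p : ℕ × Fin N => δ ^ p.1 from funext h2]
    have h3 : ∀ a : ℕ, (∑' _ : Fin N, δ ^ a) = (N : ℝ≥0∞) * δ ^ a := by
      intro a
      rw [tsum_fintype]
      simp [Finset.sum_const, nsmul_eq_mul]
    calc ∑' p : ℕ × Fin N, δ ^ p.1 = ∑' a : ℕ, ∑' _ : Fin N, δ ^ a :=
          ENNReal.tsum_prod (f := fun a _ => δ ^ a)
      _ = ∑' a : ℕ, (N : ℝ≥0∞) * δ ^ a := tsum_congr h3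
      _ = (N : ℝ≥0∞) * (1 - δ)⁻¹ := by rw [ENNReal.tsum_mul_left, ENNReal.tsum_geometric]
  have hδne : (1 - δ) ≠ 0 := by
    intro h
    exact absurd (tsub_eq_zero_iff_le.1 h) (not_le.2 hδ1)
  have hbound : sol (trA q H K) (trg q K) i
      ≤ G * ((N : ℝ≥0∞) * (1 - δ)⁻¹) := by
    calc sol (trA q H K) (trg q K) i = ∑' l, itr (trA q H K) (trg q K) l i := rfl
      _ ≤ ∑' l, G * itr (trA q H K) one l i := ENNReal.tsum_le_tsum fun l => hitrg l i
      _ = G * ∑' l, itr (trA q H K) one l i := ENNReal.tsum_mul_left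
      _ ≤ G * ∑' l, δ ^ (l / N) := by
          refine mul_le_mul' le_rfl (ENNReal.tsum_le_tsum fun l => hdiv l i)
      _ = G * ((N : ℝ≥0∞) * (1 - δ)⁻¹) := by rw [hgeom]
  refine ne_top_of_le_ne_top ?_ hbound
  exact ENNReal.mul_ne_top hGne
    (ENNReal.mul_ne_top (ENNReal.natCast_ne_top N) (ENNReal.inv_ne_top.2 hδne))
end Finiteness

end NEIT

/-- Inverse problem criterion for ergodicity of a continuous-time Markov chain. -/
theorem non_ergodic_iff_test_sequence {E : Type*} [Countable E]
    (q : E → E → ℝ) (H : Set E)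
    (hq : IsQMatrix q) (hirr : MatIrreducible q) (hreg : QRegular q)
    (hrec : MatRecurrent (embed q)) (hHne : H.Nonempty) (hHfin : H.Finite)
    (m : E → ℝ≥0∞)
    (hm : IsMinSol (fun i j => if j ∈ H then 0 else embed q i j)
      (fun i => (ENNReal.ofReal (-q i i))⁻¹) m) :
    (∃ i, m i = ⊤) ↔
      ∃ y : ℕ → E → ℝ,
        (∀ n : ℕ, BddAbove (Set.range (y n)) ∧
          ∀ i : E, (y n i : EReal) ≤
            (∑' j : E, if j ∈ H then 0 else (embed q i j : EReal) * (y n j : EReal))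
              + ((1 / (-q i i) : ℝ) : EReal)) ∧
        (⨆ n : ℕ, ⨆ i ∈ H, (y n i : EReal)) = ⊤ := by
  classical
  have hm' : IsMinSol (NEIT.kerA q H) (fun i => (ENNReal.ofReal (-q i i))⁻¹) m := hm
  have hmeq : ∀ i, m i = (∑' j, NEIT.kerA q H i j * m j) + (ENNReal.ofReal (-q i i))⁻¹ :=
    hm'.1
  constructor
  · -- forward direction
    intro htop
    obtain ⟨f, hf⟩ := exists_injective_nat E
    set K : ℕ → Set E := fun n => H ∪ (f ⁻¹' (Set.Iic n)) with hK
    have hKfin : ∀ n, (K n).Finite := fun n =>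
      hHfin.union ((Set.finite_Iic n).preimage hf.injOn)
    have hKmono : Monotone K := fun a b hab =>
      Set.union_subset_union_right H (fun i hi => le_trans hi hab)
    have hKcover : ∀ i, ∃ n, i ∈ K n := fun i => ⟨f i, Or.inr (Set.mem_preimage.2 (Set.mem_Iic.2 le_rfl))⟩
    set Mn : ℕ → E → ℝ≥0∞ := fun n => NEIT.sol (NEIT.trA q H (K n)) (NEIT.trg q (K n))
      with hMn
    have hMn_ne : ∀ n i, Mn n i ≠ ⊤ := fun n i =>
      NEIT.trSol_ne_top hq hirr hHne (hKfin n) i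
    set y : ℕ → E → ℝ := fun n i => (Mn n i).toReal with hy
    have hyzero : ∀ n i, i ∉ K n → y n i = 0 := fun n i hi => by
      rw [hy]; simp only [hMn]; rw [NEIT.trSol_zero_off hi, ENNReal.toReal_zero]
    have hynn : ∀ n i, 0 ≤ y n i := fun n i => ENNReal.toReal_nonneg
    refine ⟨y, fun n => ⟨?_, ?_⟩, ?_⟩
    · -- bounded above
      have hsub : Set.range (y n) ⊆ insert (0:ℝ) (y n '' K n) := by
        rintro _ ⟨i, rfl⟩
        by_cases hi : i ∈ K n
        · exact Set.mem_insert_of_mem _ ⟨i, hi, rfl⟩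
        · rw [hyzero n i hi]; exact Set.mem_insert _ _
      exact (((hKfin n).image (y n)).insert 0).bddAbove.mono hsub
    · -- the inequality
      intro i
      set T := (hKfin n).toFinset with hT
      have hMeq : Mn n i = (∑' j, NEIT.trA q H (K n) i j * Mn n j) + NEIT.trg q (K n) i :=
        NEIT.sol_eq _ _ i
      have hAfin : (∑' j, NEIT.trA q H (K n) i j * Mn n j) ≠ ⊤ :=
        ne_top_of_le_ne_top (hMn_ne n i) (hMeq ▸ le_self_add)
      have hzero : ∀ j ∉ T,
          (if j ∈ H then (0:EReal) else (embed q i j : EReal) * (y n j : EReal)) = 0 := by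
        intro j hj
        have hjK : j ∉ K n := fun h => hj ((hKfin n).mem_toFinset.2 h)
        by_cases hjH : j ∈ H
        · simp [hjH]
        · rw [if_neg hjH, hyzero n j hjK]
          rw [show ((0:ℝ) : EReal) = (0:EReal) from rfl, mul_zero]
      have hts : (∑' j : E, if j ∈ H then (0:EReal)
          else (embed q i j : EReal) * (y n j : EReal))
          = ∑ j ∈ T, (if j ∈ H then (0:EReal)
            else (embed q i j : EReal) * (y n j : EReal)) := tsum_eq_sum hzero
      have hfe : ∀ j, (if j ∈ H then (0:EReal)
          else (embed q i j : EReal) * (y n j : EReal))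
          = (((if j ∈ H then (0:ℝ) else (embed q i j).toReal * y n j) : ℝ) : EReal) := by
        intro j
        by_cases hjH : j ∈ H
        · simp [hjH]
        · rw [if_neg hjH, if_neg hjH, NEIT.coe_ennreal_eq (NEIT.embed_ne_top hq i j),
            ← EReal.coe_mul]
      rw [hts]
      have hcoes : (∑ j ∈ T, (if j ∈ H then (0:EReal)
          else (embed q i j : EReal) * (y n j : EReal)))
          = (((∑ j ∈ T, if j ∈ H then (0:ℝ) else (embed q i j).toReal * y n j) : ℝ) : EReal) := by
        rw [NEIT.ereal_coe_finset_sum]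
        exact Finset.sum_congr rfl fun j _ => hfe j
      rw [hcoes, ← EReal.coe_add, EReal.coe_le_coe_iff]
      -- now a real inequality
      have h1 : y n i = (∑' j, NEIT.trA q H (K n) i j * Mn n j).toReal
          + (NEIT.trg q (K n) i).toReal := by
        rw [hy]; simp only [hMn]
        rw [← ENNReal.toReal_add hAfin (ne_top_of_le_ne_top (NEIT.gfin hq i)
          (NEIT.trg_le_g i)), ← hMeq]
      have h2 : (NEIT.trg q (K n) i).toReal ≤ 1 / (-q i i) := by
        rw [NEIT.trg]
        split
        · rw [NEIT.gtoReal hq i]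
        · rw [ENNReal.toReal_zero]
          exact div_nonneg zero_le_one (hq.diag_neg i).le
      have h3 : (∑' j, NEIT.trA q H (K n) i j * Mn n j).toReal
          ≤ ∑ j ∈ T, (if j ∈ H then (0:ℝ) else (embed q i j).toReal * y n j) := by
        have hts2 : (∑' j, NEIT.trA q H (K n) i j * Mn n j)
            = ∑ j ∈ T, NEIT.trA q H (K n) i j * Mn n j := by
          refine tsum_eq_sum fun j hj => ?_
          have hjK : j ∉ K n := fun h => hj ((hKfin n).mem_toFinset.2 h)
          have hMj : Mn n j = 0 := NEIT.trSol_zero_off hjK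
          rw [hMj, mul_zero]
        rw [hts2, ENNReal.toReal_sum (fun j _ => ENNReal.mul_ne_top
          ((lt_of_le_of_lt ((NEIT.trA_le_embed i j).trans (NEIT.embed_le_one hq i j))
            ENNReal.one_lt_top).ne) (hMn_ne n j))]
        refine Finset.sum_le_sum fun j _ => ?_
        by_cases hjH : j ∈ H
        · rw [if_pos hjH, show NEIT.trA q H (K n) i j = 0 from
            if_neg (fun h => h.2.2 hjH), zero_mul, ENNReal.toReal_zero]
        · rw [if_neg hjH, ENNReal.toReal_mul]
          refine mul_le_mul_of_nonneg_right ?_ ENNReal.toReal_nonneg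
          exact ENNReal.toReal_mono (NEIT.embed_ne_top hq i j) (NEIT.trA_le_embed i j)
      linarith [h1, h2, h3]
    · -- the supremum is ⊤
      obtain ⟨i0, hi0H, hi0⟩ := NEIT.mtop_in_H hq hirr hHne hmeq htop
      have hsupM : (⨆ n, Mn n i0) = ⊤ := by
        simp only [hMn]
        rw [NEIT.trSol_iSup hKmono hKcover i0, ← NEIT.minsol_eq_sol hm']
        exact hi0
      have hkey : (⨆ n, (y n i0 : EReal)) = ⊤ := by
        refine (iSup_eq_top).2 fun b hb => ?_
        induction b using EReal.rec with
        | bot => exact ⟨0, EReal.bot_lt_coe _⟩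
        | top => exact absurd hb (lt_irrefl _)
        | coe r =>
          have hlt : ENNReal.ofReal (max r 0) + 1 < ⨆ n, Mn n i0 := by
            rw [hsupM]
            exact (ENNReal.add_ne_top.2 ⟨ENNReal.ofReal_ne_top, ENNReal.one_ne_top⟩).lt_top
          obtain ⟨n, hn⟩ := lt_iSup_iff.1 hlt
          refine ⟨n, ?_⟩
          rw [show ((r:ℝ) : EReal) = (r : EReal) from rfl]
          rw [EReal.coe_lt_coe_iff]
          have htr := ENNReal.toReal_mono (hMn_ne n i0) hn.le
          rw [ENNReal.toReal_add ENNReal.ofReal_ne_top ENNReal.one_ne_top,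
            ENNReal.toReal_ofReal (le_max_right r 0), ENNReal.toReal_one] at htr
          have : r ≤ max r 0 := le_max_left r 0
          rw [hy]
          linarith
      refine top_unique ?_
      rw [← hkey]
      refine iSup_mono fun n => ?_
      exact le_iSup₂ (f := fun i (_ : i ∈ H) => (y n i : EReal)) i0 hi0H
  · -- backward direction
    rintro ⟨y, hy1, hy2⟩
    by_contra htop
    push_neg at htop
    have hb : ∀ n i, y n i ≤ (m i).toReal := fun n =>
      NEIT.backward_le hq hirr hrec hHne hm' htop (hy1 n).1 (hy1 n).2
    have hTne : hHfin.toFinset.Nonempty := hHfin.toFinset_nonempty.2 hHne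
    set C : ℝ := hHfin.toFinset.sup' hTne (fun i => (m i).toReal) with hC
    have hle : (⨆ n : ℕ, ⨆ i ∈ H, (y n i : EReal)) ≤ (C : EReal) := by
      refine iSup_le fun n => iSup_le fun i => iSup_le fun hi => ?_
      rw [EReal.coe_le_coe_iff]
      exact le_trans (hb n i)
        (Finset.le_sup' (fun i => (m i).toReal) (hHfin.mem_toFinset.2 hi))
    rw [hy2] at hle
    exact EReal.coe_ne_top C (top_le_iff.1 hle)
end
end

section
/- Let Q be an irreducible regular Q-matrix on a countable set E whose embedding chain Π is recurrent, and let H be a nonempty finite subset of E. Then the Q-process is non-strongly ergodic (i.e. sup_{i∈E} 𝔼_i σ_H = ∞) if and only if there exists a sequence of functions y⁽ⁿ⁾ : E∖H → ℝ (n ≥ 1) such that: (1) for each n, sup_{i∉H} y⁽ⁿ⁾(i) < ∞ and y⁽ⁿ⁾(i) ≤ Σ_{j∉H} Π(i,j)·y⁽ⁿ⁾(j) + 1/q_i for every i ∉ H; and (2) sup_{n≥1} sup_{i∉H} y⁽ⁿ⁾(i) = ∞. -/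
open scoped ENNReal NNReal BigOperators Classical Topology
open Filter Set

noncomputable section

namespace NSEaux

def enToEReal : ℝ≥0∞ →+ EReal :=
  ⟨⟨(↑), EReal.coe_ennreal_zero⟩, EReal.coe_ennreal_add⟩

lemma enToEReal_apply (x : ℝ≥0∞) : enToEReal x = (x : EReal) := rfl

lemma ereal_coe_tsum {ι : Type*} (f : ι → ℝ≥0∞) :
    ∑' i, (f i : EReal) = ((∑' i, f i : ℝ≥0∞) : EReal) := by
  have h : HasSum (fun i => (f i : EReal)) ((∑' i, f i : ℝ≥0∞) : EReal) :=
    ENNReal.summable.hasSum.map enToEReal continuous_coe_ennreal_ereal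
  exact h.tsum_eq

lemma ereal_tsum_le_coe {ι : Type*} {t : ι → EReal} {τ : ι → ℝ≥0∞}
    (h : ∀ i, t i ≤ (τ i : EReal)) :
    ∑' i, t i ≤ ((∑' i, τ i : ℝ≥0∞) : EReal) := by
  by_cases hs : Summable t
  · refine le_of_tendsto hs.hasSum ?_
    filter_upwards with s
    calc ∑ i ∈ s, t i ≤ ∑ i ∈ s, ((τ i : ℝ≥0∞) : EReal) :=
          Finset.sum_le_sum fun i _ => h i
      _ = ((∑ i ∈ s, τ i : ℝ≥0∞) : EReal) := (map_sum enToEReal τ s).symm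
      _ ≤ _ := EReal.coe_ennreal_le_coe_ennreal_iff.2 (ENNReal.sum_le_tsum s)
  · rw [tsum_eq_zero_of_not_summable hs]
    exact EReal.coe_ennreal_nonneg _

lemma ereal_coe_toReal {x : ℝ≥0∞} (hx : x ≠ ⊤) : ((x.toReal : ℝ) : EReal) = (x : EReal) := by
  conv_rhs => rw [← ENNReal.ofReal_toReal hx]
  rw [EReal.coe_ennreal_ofReal, max_eq_left ENNReal.toReal_nonneg]

lemma ofReal_max_zero (a : ℝ) : ENNReal.ofReal (max a 0) = ENNReal.ofReal a := by
  rcases le_total a 0 with h | h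
  · rw [max_eq_right h, ENNReal.ofReal_zero, eq_comm, ENNReal.ofReal_eq_zero]; exact h
  · rw [max_eq_left h]

lemma tsum_iSup_mono {ι : Type*} {f : ℕ → ι → ℝ≥0∞} (hf : ∀ i, Monotone fun k => f k i) :
    ∑' i, ⨆ k, f k i = ⨆ k, ∑' i, f k i := by
  calc ∑' i, ⨆ k, f k i = ⨆ s : Finset ι, ∑ i ∈ s, ⨆ k, f k i := ENNReal.tsum_eq_iSup_sum
    _ = ⨆ s : Finset ι, ⨆ k, ∑ i ∈ s, f k i :=
        iSup_congr fun s => ENNReal.finsetSum_iSup_of_monotone fun i => hf i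
    _ = ⨆ k, ⨆ s : Finset ι, ∑ i ∈ s, f k i := iSup_comm
    _ = ⨆ k, ∑' i, f k i := iSup_congr fun k => ENNReal.tsum_eq_iSup_sum.symm

section MinSol

variable {ι : Type*} (A : ι → ι → ℝ≥0∞) (g : ι → ℝ≥0∞)

def solIter : ℕ → ι → ℝ≥0∞
  | 0 => fun _ => 0
  | k + 1 => fun i => (∑' j, A i j * solIter k j) + g i

lemma solIter_mono : Monotone (solIter A g) := by
  refine monotone_nat_of_le_succ ?_
  intro k
  induction k with
  | zero => intro i; exact zero_le
  | succ k ih =>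
    intro i
    refine add_le_add_left (ENNReal.tsum_le_tsum fun j => ?_) _
    exact mul_le_mul_right (ih j) _

lemma solIter_le_supersol {y : ι → ℝ≥0∞}
    (hy : ∀ i, (∑' j, A i j * y j) + g i ≤ y i) : ∀ k i, solIter A g k i ≤ y i := by
  intro k
  induction k with
  | zero => intro i; exact zero_le
  | succ k ih =>
    intro i
    refine le_trans ?_ (hy i)
    exact add_le_add_left (ENNReal.tsum_le_tsum fun j => mul_le_mul_right (ih j) _) _

def minSol : ι → ℝ≥0∞ := fun i => ⨆ k, solIter A g k i

lemma solIter_succ (k : ℕ) (i : ι) :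
    solIter A g (k + 1) i = (∑' j, A i j * solIter A g k j) + g i := rfl

lemma isMinSol_minSol : IsMinSol A g (minSol A g) := by
  constructor
  · intro i
    have h1 : (∑' j, A i j * minSol A g j) = ⨆ k, ∑' j, A i j * solIter A g k j := by
      unfold minSol
      simp_rw [ENNReal.mul_iSup]
      exact tsum_iSup_mono fun j => fun a b hab => mul_le_mul_right (solIter_mono A g hab j) _
    rw [h1, ENNReal.iSup_add]
    simp_rw [← solIter_succ]
    apply le_antisymm
    · exact iSup_le fun k => le_iSup_of_le k (solIter_mono A g (Nat.le_succ k) i)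
    · exact iSup_le fun k => le_iSup_of_le (k + 1) le_rfl
  · intro y hy i
    exact iSup_le fun k => solIter_le_supersol A g (fun i' => (hy i').ge) k i

lemma minsol_le_supersol {x y : ι → ℝ≥0∞} (hx : IsMinSol A g x)
    (hy : ∀ i, (∑' j, A i j * y j) + g i ≤ y i) : ∀ i, x i ≤ y i := by
  intro i
  refine le_trans (hx.2 _ (isMinSol_minSol A g).1 i) ?_
  exact iSup_le fun k => solIter_le_supersol A g hy k i

end MinSol

lemma embed_rowsum {E : Type*} {q : E → E → ℝ} (hq : IsQMatrix q) (i : E) :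
    ∑' j, embed q i j = 1 := by
  have hpos := hq.diag_neg i
  have hsum : HasSum (fun j => (if j = i then 0 else q i j) / (-q i i)) 1 := by
    simpa [div_self hpos.ne'] using (hq.row_hasSum i).div_const (-q i i)
  have hnn : ∀ j, 0 ≤ (if j = i then 0 else q i j) / (-q i i) := by
    intro j
    split
    · simp
    · exact div_nonneg (hq.offdiag_nonneg i j (Ne.symm ‹_›)) hpos.le
  have h1 : ENNReal.ofReal (∑' j, (if j = i then 0 else q i j) / (-q i i))
      = ∑' j, ENNReal.ofReal ((if j = i then 0 else q i j) / (-q i i)) :=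
    ENNReal.ofReal_tsum_of_nonneg hnn hsum.summable
  rw [hsum.tsum_eq] at h1
  have h2 : ∀ j, ENNReal.ofReal ((if j = i then 0 else q i j) / (-q i i)) = embed q i j := by
    intro j
    unfold embed
    split <;> simp
  rw [tsum_congr h2] at h1
  rw [← h1, ENNReal.ofReal_one]

lemma ereal_coe_mul_eq (x : ℝ≥0∞) {a : ℝ} (ha : 0 ≤ a) :
    ((x * ENNReal.ofReal a : ℝ≥0∞) : EReal) = (x : EReal) * (a : EReal) := by
  rw [EReal.coe_ennreal_mul, EReal.coe_ennreal_ofReal, max_eq_left ha]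

lemma ereal_coe_mul_le {x : ℝ≥0∞} (hx : x ≠ ⊤) (a : ℝ) :
    (x : EReal) * (a : EReal) ≤ ((x * ENNReal.ofReal a : ℝ≥0∞) : EReal) := by
  lift x to ℝ≥0 using hx
  rw [EReal.coe_ennreal_mul, EReal.coe_nnreal_eq_coe_real, EReal.coe_ennreal_ofReal,
    ← EReal.coe_mul, ← EReal.coe_mul]
  exact EReal.coe_le_coe_iff.2 (mul_le_mul_of_nonneg_left (le_max_left a 0) x.2)

end NSEaux

/-- Inverse problem criterion for strong ergodicity of a continuous-time Markov chain. -/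
theorem non_strongly_ergodic_iff_test_sequence {E : Type*} [Countable E]
    (q : E → E → ℝ) (H : Set E)
    (hq : IsQMatrix q) (hirr : MatIrreducible q) (hreg : QRegular q)
    (hrec : MatRecurrent (embed q)) (hHne : H.Nonempty) (hHfin : H.Finite)
    (m : E → ℝ≥0∞)
    (hm : IsMinSol (fun i j => if j ∈ H then 0 else embed q i j)
      (fun i => (ENNReal.ofReal (-q i i))⁻¹) m) :
    (⨆ i, m i) = ⊤ ↔
      ∃ y : ℕ → E → ℝ,
        (∀ n : ℕ, BddAbove (y n '' {i | i ∉ H}) ∧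
          ∀ i ∉ H, (y n i : EReal) ≤
            (∑' j : E, if j ∈ H then 0 else (embed q i j : EReal) * (y n j : EReal))
              + ((1 / (-q i i) : ℝ) : EReal)) ∧
        (⨆ n : ℕ, ⨆ i : E, ⨆ (_ : i ∉ H), (y n i : EReal)) = ⊤ := by
  classical
  obtain ⟨o, ho⟩ := hrec
  set A : E → E → ℝ≥0∞ := fun i j => if j ∈ H then 0 else embed q i j with hAdef
  set g : E → ℝ≥0∞ := fun i => (ENNReal.ofReal (-q i i))⁻¹ with hgdef
  have hqpos : ∀ i, 0 < -q i i := hq.diag_neg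
  have hq_inv_pos : ∀ i, 0 < 1 / (-q i i) := fun i => one_div_pos.2 (hqpos i)
  have hrow : ∀ i, ∑' j, embed q i j = 1 := NSEaux.embed_rowsum hq
  have hembed_ne_top : ∀ i j, embed q i j ≠ ⊤ := by
    intro i j
    unfold embed
    split
    · exact ENNReal.zero_ne_top
    · exact ENNReal.ofReal_ne_top
  have hAH : ∀ i j, j ∈ H → A i j = 0 := fun i j hj => by simp only [hAdef, if_pos hj]
  have hAnH : ∀ i j, j ∉ H → A i j = embed q i j := fun i j hj => by
    simp only [hAdef, if_neg hj]
  have hrowA : ∀ i, (∑' j, A i j) ≤ 1 := by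
    intro i
    rw [← hrow i]
    refine ENNReal.tsum_le_tsum fun j => ?_
    by_cases hj : j ∈ H
    · rw [hAH i j hj]; exact zero_le
    · rw [hAnH i j hj]
  have hg_eq : ∀ i, g i = ENNReal.ofReal (1 / (-q i i)) := by
    intro i
    simp only [hgdef]
    rw [one_div, ENNReal.ofReal_inv_of_pos (hqpos i)]
  have hg_ne_top : ∀ i, g i ≠ ⊤ := fun i => by rw [hg_eq i]; exact ENNReal.ofReal_ne_top
  constructor
  · intro htop
    by_cases hbdd : ∃ C : ℝ, ∀ i, i ∉ H → 1 / (-q i i) ≤ C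
    · -- Case B : rates bounded below, use iterates of the minimal solution
      obtain ⟨C, hC⟩ := hbdd
      set z : ℕ → E → ℝ≥0∞ := NSEaux.solIter A g with hzdef
      have hzsucc : ∀ k i, z (k + 1) i = (∑' j, A i j * z k j) + g i := fun k i => rfl
      have hzmono : ∀ k i, z k i ≤ z (k + 1) i :=
        fun k i => NSEaux.solIter_mono A g (Nat.le_succ k) i
      have hzb : ∀ k, ∀ i, i ∉ H → z k i ≤ (k : ℝ≥0∞) * ENNReal.ofReal C := by
        intro k
        induction k with
        | zero =>
          intro i hi
          have h0 : z 0 i = 0 := rfl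
          rw [h0]; exact zero_le
        | succ k ih =>
          intro i hi
          rw [hzsucc]
          have h1 : (∑' j, A i j * z k j) ≤ (k : ℝ≥0∞) * ENNReal.ofReal C := by
            calc (∑' j, A i j * z k j)
                ≤ ∑' j, A i j * ((k : ℝ≥0∞) * ENNReal.ofReal C) := by
                  refine ENNReal.tsum_le_tsum fun j => ?_
                  by_cases hj : j ∈ H
                  · rw [hAH i j hj]; simp
                  · exact mul_le_mul_right (ih j hj) _
              _ = (∑' j, A i j) * ((k : ℝ≥0∞) * ENNReal.ofReal C) := ENNReal.tsum_mul_right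
              _ ≤ 1 * ((k : ℝ≥0∞) * ENNReal.ofReal C) := mul_le_mul_left (hrowA i) _
              _ = (k : ℝ≥0∞) * ENNReal.ofReal C := one_mul _
          have h2 : g i ≤ ENNReal.ofReal C := by
            rw [hg_eq i]; exact ENNReal.ofReal_le_ofReal (hC i hi)
          refine le_trans (add_le_add h1 h2) ?_
          rw [Nat.cast_succ, add_mul, one_mul]
      have hkC_ne_top : ∀ k : ℕ, ((k : ℝ≥0∞) * ENNReal.ofReal C) ≠ ⊤ :=
        fun k => ENNReal.mul_ne_top (ENNReal.natCast_ne_top k) ENNReal.ofReal_ne_top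
      have hzfin : ∀ k i, i ∉ H → z k i ≠ ⊤ :=
        fun k i hi => ne_top_of_le_ne_top (hkC_ne_top k) (hzb k i hi)
      have hSfin : ∀ k i, (∑' j, A i j * z k j) ≠ ⊤ := by
        intro k i
        refine ne_top_of_le_ne_top (hkC_ne_top k) ?_
        calc (∑' j, A i j * z k j)
            ≤ ∑' j, A i j * ((k : ℝ≥0∞) * ENNReal.ofReal C) := by
              refine ENNReal.tsum_le_tsum fun j => ?_
              by_cases hj : j ∈ H
              · rw [hAH i j hj]; simp
              · exact mul_le_mul_right (hzb k j hj) _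
          _ = (∑' j, A i j) * ((k : ℝ≥0∞) * ENNReal.ofReal C) := ENNReal.tsum_mul_right
          _ ≤ 1 * ((k : ℝ≥0∞) * ENNReal.ofReal C) := mul_le_mul_left (hrowA i) _
          _ = (k : ℝ≥0∞) * ENNReal.ofReal C := one_mul _
      refine ⟨fun k i => (z k i).toReal, fun k => ⟨?_, ?_⟩, ?_⟩
      · refine ⟨((k : ℝ≥0∞) * ENNReal.ofReal C).toReal, ?_⟩
        rintro x ⟨i, hi, rfl⟩
        exact ENNReal.toReal_mono (hkC_ne_top k) (hzb k i hi)
      · intro i hi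
        have hterm : ∀ j,
            (if j ∈ H then 0 else (embed q i j : EReal) * (((z k j).toReal : ℝ) : EReal))
              = ((if j ∈ H then (0 : ℝ≥0∞) else embed q i j * ENNReal.ofReal ((z k j).toReal)
                  : ℝ≥0∞) : EReal) := by
          intro j
          by_cases hj : j ∈ H
          · rw [if_pos hj, if_pos hj, EReal.coe_ennreal_zero]
          · rw [if_neg hj, if_neg hj,
              NSEaux.ereal_coe_mul_eq (embed q i j) ENNReal.toReal_nonneg]
        have hτA : ∀ j, (if j ∈ H then (0 : ℝ≥0∞)
            else embed q i j * ENNReal.ofReal ((z k j).toReal)) = A i j * z k j := by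
          intro j
          by_cases hj : j ∈ H
          · rw [if_pos hj, hAH i j hj, zero_mul]
          · rw [if_neg hj, hAnH i j hj, ENNReal.ofReal_toReal (hzfin k j hj)]
        have hsum :
            (∑' j, if j ∈ H then 0 else (embed q i j : EReal) * (((z k j).toReal : ℝ) : EReal))
              = ((∑' j, A i j * z k j : ℝ≥0∞) : EReal) := by
          rw [tsum_congr hterm]
          rw [NSEaux.ereal_coe_tsum]
          rw [tsum_congr hτA]
        have hle : (z k i).toReal ≤ (∑' j, A i j * z k j).toReal + 1 / (-q i i) := by
          have h2 : z k i ≤ (∑' j, A i j * z k j) + g i := by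
            rw [← hzsucc k i]; exact hzmono k i
          have hfin2 : (∑' j, A i j * z k j) + g i ≠ ⊤ :=
            ENNReal.add_ne_top.2 ⟨hSfin k i, hg_ne_top i⟩
          have h3 := ENNReal.toReal_mono hfin2 h2
          rw [ENNReal.toReal_add (hSfin k i) (hg_ne_top i)] at h3
          rw [hg_eq i, ENNReal.toReal_ofReal (hq_inv_pos i).le] at h3
          exact h3
        rw [hsum]
        calc (((z k i).toReal : ℝ) : EReal)
            ≤ (((∑' j, A i j * z k j).toReal + 1 / (-q i i) : ℝ) : EReal) :=
              EReal.coe_le_coe_iff.2 hle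
          _ = _ := by rw [EReal.coe_add, NSEaux.ereal_coe_toReal (hSfin k i)]
      · have claim : ∀ r : ℝ, ∃ k, ∃ i, i ∉ H ∧ r < (z k i).toReal := by
          intro r
          by_contra hcon
          push_neg at hcon
          have hm_le : ∀ i, i ∉ H → m i ≤ ENNReal.ofReal r := by
            intro i hi
            have h1 : m i ≤ NSEaux.minSol A g i := hm.2 _ (NSEaux.isMinSol_minSol A g).1 i
            refine h1.trans (iSup_le fun k => ?_)
            exact (ENNReal.le_ofReal_iff_toReal_le (hzfin k i hi)
              (ENNReal.toReal_nonneg.trans (hcon k i hi))).2 (hcon k i hi)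
          have hGfin : hHfin.toFinset.sup g ≠ ⊤ := by
            refine LT.lt.ne ((Finset.sup_lt_iff (by simp : (⊥ : ℝ≥0∞) < ⊤)).2 ?_)
            intro i _
            exact lt_top_iff_ne_top.2 (hg_ne_top i)
          have hub : ∀ i, m i ≤ ENNReal.ofReal r + hHfin.toFinset.sup g := by
            intro i
            by_cases hi : i ∈ H
            · have h1 : (∑' j, A i j * m j) ≤ ENNReal.ofReal r := by
                calc (∑' j, A i j * m j) ≤ ∑' j, A i j * ENNReal.ofReal r := by
                      refine ENNReal.tsum_le_tsum fun j => ?_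
                      by_cases hj : j ∈ H
                      · rw [hAH i j hj]; simp
                      · exact mul_le_mul_right (hm_le j hj) _
                  _ = (∑' j, A i j) * ENNReal.ofReal r := ENNReal.tsum_mul_right
                  _ ≤ 1 * ENNReal.ofReal r := mul_le_mul_left (hrowA i) _
                  _ = ENNReal.ofReal r := one_mul _
              rw [hm.1 i]
              exact add_le_add h1 (Finset.le_sup (hHfin.mem_toFinset.2 hi))
            · exact (hm_le i hi).trans le_self_add
          exact (ne_top_of_le_ne_top
            (ENNReal.add_ne_top.2 ⟨ENNReal.ofReal_ne_top, hGfin⟩) (iSup_le hub)) htop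
        rw [iSup_eq_top]
        intro b hb
        obtain ⟨r, hbr, -⟩ := EReal.exists_between_coe_real hb
        obtain ⟨k, i, hiH, hri⟩ := claim r
        refine ⟨k, lt_of_lt_of_le (hbr.trans_le (EReal.coe_le_coe_iff.2 hri.le)) ?_⟩
        exact le_iSup_of_le i (le_iSup_of_le hiH le_rfl)
    · -- Case A : rates unbounded
      push_neg at hbdd
      refine ⟨fun n i => min (1 / (-q i i)) (n : ℝ), fun n => ⟨?_, ?_⟩, ?_⟩
      · exact ⟨(n : ℝ), by rintro x ⟨i, hi, rfl⟩; exact min_le_right _ _⟩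
      · intro i hi
        have hynn : ∀ j : E, (0 : ℝ) ≤ min (1 / (-q j j)) (n : ℝ) :=
          fun j => le_min (hq_inv_pos j).le (Nat.cast_nonneg n)
        have hterm : ∀ j,
            (if j ∈ H then 0 else (embed q i j : EReal) * ((min (1 / (-q j j)) (n : ℝ) : ℝ) : EReal))
              = ((if j ∈ H then (0 : ℝ≥0∞)
                  else embed q i j * ENNReal.ofReal (min (1 / (-q j j)) (n : ℝ)) : ℝ≥0∞) : EReal) := by
          intro j
          by_cases hj : j ∈ H
          · rw [if_pos hj, if_pos hj, EReal.coe_ennreal_zero]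
          · rw [if_neg hj, if_neg hj, NSEaux.ereal_coe_mul_eq (embed q i j) (hynn j)]
        have h0 : (0 : EReal)
            ≤ ∑' j, if j ∈ H then 0 else (embed q i j : EReal) * ((min (1 / (-q j j)) (n : ℝ) : ℝ) : EReal) := by
          rw [tsum_congr hterm, NSEaux.ereal_coe_tsum]
          exact EReal.coe_ennreal_nonneg _
        calc ((min (1 / (-q i i)) (n : ℝ) : ℝ) : EReal)
            ≤ ((1 / (-q i i) : ℝ) : EReal) := EReal.coe_le_coe_iff.2 (min_le_left _ _)
          _ = 0 + ((1 / (-q i i) : ℝ) : EReal) := (zero_add _).symm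
          _ ≤ _ := add_le_add_left h0 _
      · rw [iSup_eq_top]
        intro b hb
        obtain ⟨r, hbr, -⟩ := EReal.exists_between_coe_real hb
        obtain ⟨i, hiH, hri⟩ := hbdd (max r 0)
        refine ⟨⌈1 / (-q i i)⌉₊, ?_⟩
        have hmin : min (1 / (-q i i)) ((⌈1 / (-q i i)⌉₊ : ℕ) : ℝ) = 1 / (-q i i) :=
          min_eq_left (Nat.le_ceil _)
        have hlt : r < min (1 / (-q i i)) ((⌈1 / (-q i i)⌉₊ : ℕ) : ℝ) := by
          rw [hmin]; exact lt_of_le_of_lt (le_max_left r 0) hri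
        exact lt_of_lt_of_le (hbr.trans (EReal.coe_lt_coe_iff.2 hlt))
          (le_iSup_of_le i (le_iSup_of_le hiH le_rfl))
  · rintro ⟨y, hy1, hy2⟩
    by_contra htop
    have hmfin : ∀ i, m i ≠ ⊤ := fun i => ne_top_of_le_ne_top htop (le_iSup m i)
    have key : ∀ n, ∀ i, i ∉ H → y n i ≤ (m i).toReal := by
      intro n
      by_contra hcon
      push_neg at hcon
      obtain ⟨i₀, hi₀H, hi₀⟩ := hcon
      obtain ⟨hB, hsub⟩ := hy1 n
      obtain ⟨B, hBub⟩ := hB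
      have hbd : BddAbove ((fun i => y n i - (m i).toReal) '' {i | i ∉ H}) := by
        refine ⟨B, ?_⟩
        rintro x ⟨i, hi, rfl⟩
        have h1 : y n i ≤ B := hBub ⟨i, hi, rfl⟩
        have h2 : (0 : ℝ) ≤ (m i).toReal := ENNReal.toReal_nonneg
        dsimp only
        linarith
      set s := sSup ((fun i => y n i - (m i).toReal) '' {i | i ∉ H}) with hsdef
      have hfs : ∀ i, i ∉ H → y n i - (m i).toReal ≤ s :=
        fun i hi => le_csSup hbd ⟨i, hi, rfl⟩
      have hspos : 0 < s :=
        lt_of_lt_of_le (by linarith : (0:ℝ) < y n i₀ - (m i₀).toReal) (hfs i₀ hi₀H)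
      set gr : E → ℝ := fun i => if i ∈ H then 0 else max (y n i - (m i).toReal) 0 with hgrdef
      have hgr0 : ∀ i, 0 ≤ gr i := by
        intro i
        simp only [hgrdef]
        split
        · exact le_rfl
        · exact le_max_right _ _
      have hgrs : ∀ i, gr i ≤ s := by
        intro i
        simp only [hgrdef]
        split
        · exact hspos.le
        · exact max_le (hfs i ‹_›) hspos.le
      have hgrH : ∀ i, i ∈ H → gr i = 0 := fun i hi => by simp only [hgrdef, if_pos hi]
      have hgrnH : ∀ i, i ∉ H → gr i = max (y n i - (m i).toReal) 0 :=
        fun i hi => by simp only [hgrdef, if_neg hi]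
      -- the core inequality
      have core : ∀ i, i ∉ H →
          ENNReal.ofReal (gr i) ≤ ∑' j, A i j * ENNReal.ofReal (gr j) := by
        intro i hi
        have hterm : ∀ j,
            (if j ∈ H then 0 else (embed q i j : EReal) * ((y n j : ℝ) : EReal))
              ≤ ((if j ∈ H then (0 : ℝ≥0∞)
                  else embed q i j * ENNReal.ofReal (y n j) : ℝ≥0∞) : EReal) := by
          intro j
          by_cases hj : j ∈ H
          · rw [if_pos hj, if_pos hj, EReal.coe_ennreal_zero]
          · rw [if_neg hj, if_neg hj]
            exact NSEaux.ereal_coe_mul_le (hembed_ne_top i j) (y n j)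
        have h1 : ((y n i : ℝ) : EReal)
            ≤ ((∑' j, (if j ∈ H then (0 : ℝ≥0∞)
                else embed q i j * ENNReal.ofReal (y n j)) : ℝ≥0∞) : EReal)
              + ((1 / (-q i i) : ℝ) : EReal) :=
          le_trans (hsub i hi) (add_le_add_left (NSEaux.ereal_tsum_le_coe hterm) _)
        have h2 : ENNReal.ofReal (y n i)
            ≤ (∑' j, (if j ∈ H then (0 : ℝ≥0∞) else embed q i j * ENNReal.ofReal (y n j))) + g i := by
          by_cases hfin : (∑' j, (if j ∈ H then (0 : ℝ≥0∞)
              else embed q i j * ENNReal.ofReal (y n j))) = ⊤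
          · rw [hfin, top_add]; exact le_top
          · rw [← NSEaux.ereal_coe_toReal hfin, ← EReal.coe_add, EReal.coe_le_coe_iff] at h1
            calc ENNReal.ofReal (y n i)
                ≤ ENNReal.ofReal ((∑' j, (if j ∈ H then (0 : ℝ≥0∞)
                    else embed q i j * ENNReal.ofReal (y n j))).toReal + 1 / (-q i i)) :=
                  ENNReal.ofReal_le_ofReal h1
              _ = ENNReal.ofReal ((∑' j, (if j ∈ H then (0 : ℝ≥0∞)
                    else embed q i j * ENNReal.ofReal (y n j))).toReal)
                  + ENNReal.ofReal (1 / (-q i i)) :=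
                  ENNReal.ofReal_add ENNReal.toReal_nonneg (hq_inv_pos i).le
              _ = _ := by rw [ENNReal.ofReal_toReal hfin, hg_eq i]
        have h3 : (∑' j, (if j ∈ H then (0 : ℝ≥0∞) else embed q i j * ENNReal.ofReal (y n j)))
            ≤ (∑' j, A i j * m j) + (∑' j, A i j * ENNReal.ofReal (gr j)) := by
          rw [← ENNReal.tsum_add]
          refine ENNReal.tsum_le_tsum fun j => ?_
          by_cases hj : j ∈ H
          · rw [if_pos hj]; exact zero_le
          · rw [if_neg hj, hAnH i j hj, ← mul_add]
            refine mul_le_mul_right ?_ _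
            have hle : y n j ≤ (m j).toReal + gr j := by
              rw [hgrnH j hj]
              have := le_max_left (y n j - (m j).toReal) 0
              linarith
            calc ENNReal.ofReal (y n j) ≤ ENNReal.ofReal ((m j).toReal + gr j) :=
                  ENNReal.ofReal_le_ofReal hle
              _ = ENNReal.ofReal ((m j).toReal) + ENNReal.ofReal (gr j) :=
                  ENNReal.ofReal_add ENNReal.toReal_nonneg (hgr0 j)
              _ = m j + ENNReal.ofReal (gr j) := by rw [ENNReal.ofReal_toReal (hmfin j)]
        have h4 : ENNReal.ofReal (y n i) ≤ m i + ∑' j, A i j * ENNReal.ofReal (gr j) := by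
          refine h2.trans ?_
          calc (∑' j, (if j ∈ H then (0 : ℝ≥0∞) else embed q i j * ENNReal.ofReal (y n j))) + g i
              ≤ ((∑' j, A i j * m j) + (∑' j, A i j * ENNReal.ofReal (gr j))) + g i :=
                add_le_add_left h3 _
            _ = ((∑' j, A i j * m j) + g i) + ∑' j, A i j * ENNReal.ofReal (gr j) := by ring
            _ = m i + ∑' j, A i j * ENNReal.ofReal (gr j) := by rw [← hm.1 i]
        rw [hgrnH i hi, NSEaux.ofReal_max_zero,
          ENNReal.ofReal_sub _ ENNReal.toReal_nonneg, ENNReal.ofReal_toReal (hmfin i),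
          tsub_le_iff_right]
        exact h4.trans (by rw [add_comm])
      have coreE : ∀ i, i ∉ H →
          ENNReal.ofReal (gr i) ≤ ∑' j, embed q i j * ENNReal.ofReal (gr j) := by
        intro i hi
        refine (core i hi).trans (le_of_eq (tsum_congr fun j => ?_))
        by_cases hj : j ∈ H
        · simp [hAH i j hj, hgrH j hj]
        · rw [hAnH i j hj]
      -- the superharmonic function W
      set Wf : E → ℝ := fun i => 1 - gr i / s with hWfdef
      have hWf0 : ∀ i, 0 ≤ Wf i := by
        intro i
        have h1 : gr i / s ≤ 1 := (div_le_one hspos).2 (hgrs i)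
        simp only [hWfdef]
        linarith
      have hWf1 : ∀ i, Wf i ≤ 1 := by
        intro i
        have h1 : 0 ≤ gr i / s := div_nonneg (hgr0 i) hspos.le
        simp only [hWfdef]
        linarith
      have hWfH : ∀ i, i ∈ H → Wf i = 1 := by
        intro i hi
        simp only [hWfdef]
        rw [hgrH i hi, zero_div, sub_zero]
      have hdecomp : ∀ j, ENNReal.ofReal (Wf j) + ENNReal.ofReal (gr j / s) = 1 := by
        intro j
        rw [← ENNReal.ofReal_add (hWf0 j) (div_nonneg (hgr0 j) hspos.le)]
        simp only [hWfdef]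
        rw [sub_add_cancel, ENNReal.ofReal_one]
      have hsplit : ∀ i, (∑' j, embed q i j * ENNReal.ofReal (Wf j))
          + (∑' j, embed q i j * ENNReal.ofReal (gr j / s)) = 1 := by
        intro i
        rw [← ENNReal.tsum_add]
        calc ∑' j, (embed q i j * ENNReal.ofReal (Wf j) + embed q i j * ENNReal.ofReal (gr j / s))
            = ∑' j, embed q i j * (ENNReal.ofReal (Wf j) + ENNReal.ofReal (gr j / s)) :=
              tsum_congr fun j => (mul_add _ _ _).symm
          _ = ∑' j, embed q i j := tsum_congr fun j => by rw [hdecomp j, mul_one]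
          _ = 1 := hrow i
      have score : ∀ i, ENNReal.ofReal (gr i / s)
          ≤ ∑' j, embed q i j * ENNReal.ofReal (gr j / s) := by
        intro i
        have hrw : ∀ j, ENNReal.ofReal (gr j / s)
            = ENNReal.ofReal (gr j) * ENNReal.ofReal s⁻¹ := fun j => by
          rw [div_eq_mul_inv, ENNReal.ofReal_mul (hgr0 j)]
        by_cases hi : i ∈ H
        · rw [hgrH i hi, zero_div, ENNReal.ofReal_zero]; exact zero_le
        · calc ENNReal.ofReal (gr i / s) = ENNReal.ofReal (gr i) * ENNReal.ofReal s⁻¹ := hrw i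
            _ ≤ (∑' j, embed q i j * ENNReal.ofReal (gr j)) * ENNReal.ofReal s⁻¹ :=
              mul_le_mul_left (coreE i hi) _
            _ = ∑' j, embed q i j * ENNReal.ofReal (gr j) * ENNReal.ofReal s⁻¹ :=
              ENNReal.tsum_mul_right.symm
            _ = ∑' j, embed q i j * ENNReal.ofReal (gr j / s) :=
              tsum_congr fun j => by rw [hrw j, mul_assoc]
      have Wsuper : ∀ i, (∑' j, embed q i j * ENNReal.ofReal (Wf j)) ≤ ENNReal.ofReal (Wf i) := by
        intro i
        have h1 : (∑' j, embed q i j * ENNReal.ofReal (Wf j)) + ENNReal.ofReal (gr i / s)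
            ≤ ENNReal.ofReal (Wf i) + ENNReal.ofReal (gr i / s) := by
          calc (∑' j, embed q i j * ENNReal.ofReal (Wf j)) + ENNReal.ofReal (gr i / s)
              ≤ (∑' j, embed q i j * ENNReal.ofReal (Wf j))
                + ∑' j, embed q i j * ENNReal.ofReal (gr j / s) := add_le_add_right (score i) _
            _ = 1 := hsplit i
            _ = ENNReal.ofReal (Wf i) + ENNReal.ofReal (gr i / s) := (hdecomp i).symm
        exact (ENNReal.add_le_add_iff_right ENNReal.ofReal_ne_top).1 h1
      -- W dominates its value at the recurrent state o
      set c := Wf o with hcdef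
      have hc0 : 0 ≤ c := hWf0 o
      have hWc : ∀ i, c ≤ Wf i := by
        by_cases hcpos : 0 < c
        · set S : E → ℝ := fun i => min (Wf i) c / c with hSdef
          have hSnn : ∀ j, 0 ≤ min (Wf j) c := fun j => le_min (hWf0 j) hc0
          have hSo : S o = 1 := by
            simp only [hSdef]
            rw [hcdef, min_self, div_self (by rw [← hcdef]; exact hcpos.ne')]
          have hofmin : ∀ j, ENNReal.ofReal (min (Wf j) c)
              = min (ENNReal.ofReal (Wf j)) (ENNReal.ofReal c) := fun j =>
            Monotone.map_min (fun _ _ h => ENNReal.ofReal_le_ofReal h)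
          have hrwS : ∀ j, ENNReal.ofReal (S j)
              = ENNReal.ofReal (min (Wf j) c) * ENNReal.ofReal c⁻¹ := by
            intro j
            simp only [hSdef]
            rw [div_eq_mul_inv, ENNReal.ofReal_mul (hSnn j)]
          have hSsuper : ∀ i : E,
              (∑' j, embed q i j * ENNReal.ofReal (S j)) ≤ ENNReal.ofReal (S i) := by
            intro i
            have hmin : (∑' j, embed q i j * ENNReal.ofReal (min (Wf j) c))
                ≤ ENNReal.ofReal (min (Wf i) c) := by
              rw [hofmin i]
              refine le_min ?_ ?_
              · refine le_trans (ENNReal.tsum_le_tsum fun j => mul_le_mul_right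
                  (by rw [hofmin j]; exact min_le_left _ _) _) (Wsuper i)
              · calc (∑' j, embed q i j * ENNReal.ofReal (min (Wf j) c))
                    ≤ ∑' j, embed q i j * ENNReal.ofReal c :=
                      ENNReal.tsum_le_tsum fun j => mul_le_mul_right
                        (by rw [hofmin j]; exact min_le_right _ _) _
                  _ = (∑' j, embed q i j) * ENNReal.ofReal c := ENNReal.tsum_mul_right
                  _ = ENNReal.ofReal c := by rw [hrow i, one_mul]
            calc (∑' j, embed q i j * ENNReal.ofReal (S j))
                = (∑' j, embed q i j * ENNReal.ofReal (min (Wf j) c)) * ENNReal.ofReal c⁻¹ := by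
                  rw [← ENNReal.tsum_mul_right]
                  exact tsum_congr fun j => by rw [hrwS j, mul_assoc]
              _ ≤ ENNReal.ofReal (min (Wf i) c) * ENNReal.ofReal c⁻¹ :=
                mul_le_mul_left hmin _
              _ = ENNReal.ofReal (S i) := (hrwS i).symm
          have hsplit_o : ∀ h : E → ℝ≥0∞, ∑' j, h j = h o + ∑' j : {j : E // j ≠ o}, h j.1 := by
            intro h
            rw [ENNReal.tsum_eq_add_tsum_ite o]
            congr 1
            have h1 : ∑' (j : ({j : E | j ≠ o} : Set E)), h j.1
                = ∑' x, Set.indicator {j : E | j ≠ o} h x := tsum_subtype _ h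
            have h2 : ∀ x, Set.indicator {j : E | j ≠ o} h x = ite (x = o) 0 (h x) := by
              intro x
              by_cases hx : x = o <;> simp [Set.indicator, hx]
            rw [tsum_congr h2] at h1
            exact h1.symm
          have hval : ∀ i : {i : E // i ≠ o},
              (∑' j : {j : E // j ≠ o}, embed q i.1 j.1 * ENNReal.ofReal (S j.1))
                + embed q i.1 o ≤ ENNReal.ofReal (S i.1) := by
            intro i
            have h1 := hSsuper i.1
            rw [hsplit_o (fun j => embed q i.1 j * ENNReal.ofReal (S j))] at h1
            rw [hSo, ENNReal.ofReal_one, mul_one, add_comm] at h1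
            exact h1
          have hms := NSEaux.isMinSol_minSol
            (fun i j : {i : E // i ≠ o} => embed q i.1 j.1) (fun i => embed q i.1 o)
          have hv1 : ∀ i : {i : E // i ≠ o}, (1 : ℝ≥0∞) ≤ ENNReal.ofReal (S i.1) := by
            intro i
            have h1 := ho _ hms i
            rw [← h1]
            exact NSEaux.minsol_le_supersol _ _ hms hval i
          intro i
          by_cases hio : i = o
          · rw [hio, ← hcdef]
          · have h1 := hv1 ⟨i, hio⟩
            have hS1 : 1 ≤ S i := ENNReal.one_le_ofReal.1 h1
            simp only [hSdef] at hS1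
            rw [le_div_iff₀ hcpos, one_mul] at hS1
            exact le_trans hS1 (min_le_left _ _)
        · intro i
          exact le_trans (not_lt.1 hcpos) (hWf0 i)
      -- propagation of the zero of W - c from o
      have hDsuper : ∀ i, (∑' j, embed q i j * ENNReal.ofReal (Wf j - c))
          ≤ ENNReal.ofReal (Wf i - c) := by
        intro i
        have hdec : ∀ j, ENNReal.ofReal (Wf j)
            = ENNReal.ofReal (Wf j - c) + ENNReal.ofReal c := by
          intro j
          rw [← ENNReal.ofReal_add (by linarith [hWc j]) hc0, sub_add_cancel]
        have h1 : (∑' j, embed q i j * ENNReal.ofReal (Wf j))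
            = (∑' j, embed q i j * ENNReal.ofReal (Wf j - c)) + ENNReal.ofReal c := by
          calc ∑' j, embed q i j * ENNReal.ofReal (Wf j)
              = ∑' j, (embed q i j * ENNReal.ofReal (Wf j - c) + embed q i j * ENNReal.ofReal c) :=
                tsum_congr fun j => by rw [hdec j, mul_add]
            _ = (∑' j, embed q i j * ENNReal.ofReal (Wf j - c))
                + ∑' j, embed q i j * ENNReal.ofReal c := ENNReal.tsum_add
            _ = (∑' j, embed q i j * ENNReal.ofReal (Wf j - c)) + ENNReal.ofReal c := by
                rw [ENNReal.tsum_mul_right, hrow i, one_mul]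
        have h2 := Wsuper i
        rw [h1, hdec i] at h2
        exact (ENNReal.add_le_add_iff_right ENNReal.ofReal_ne_top).1 h2
      have hstep : ∀ a b, ENNReal.ofReal (Wf a - c) = 0 → 0 < q a b
          → ENNReal.ofReal (Wf b - c) = 0 := by
        intro a b ha hab
        have hba : b ≠ a := by
          intro e
          subst e
          have h1 := hqpos b
          linarith
        have hPi : embed q a b ≠ 0 := by
          unfold embed
          rw [if_neg hba]
          simp only [ne_eq, ENNReal.ofReal_eq_zero, not_le]
          exact div_pos hab (hqpos a)
        have h1 : embed q a b * ENNReal.ofReal (Wf b - c) ≤ 0 := by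
          calc embed q a b * ENNReal.ofReal (Wf b - c)
              ≤ ∑' j, embed q a j * ENNReal.ofReal (Wf j - c) := ENNReal.le_tsum b
            _ ≤ ENNReal.ofReal (Wf a - c) := hDsuper a
            _ = 0 := ha
        rcases mul_eq_zero.1 (le_antisymm h1 (zero_le)) with h | h
        · exact absurd h hPi
        · exact h
      have hDo : ENNReal.ofReal (Wf o - c) = 0 := by
        rw [hcdef, sub_self, ENNReal.ofReal_zero]
      have hprop : ∀ b, Relation.TransGen (fun a b => 0 < q a b) o b
          → ENNReal.ofReal (Wf b - c) = 0 := by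
        intro b hb
        induction hb with
        | single h => exact hstep _ _ hDo h
        | tail _ h ih => exact hstep _ _ ih h
      obtain ⟨h₀, hh₀⟩ := hHne
      have hc1 : 1 ≤ c := by
        by_cases hoH : o ∈ H
        · rw [hcdef, hWfH o hoH]
        · have hoh : o ≠ h₀ := fun e => hoH (e ▸ hh₀)
          have h1 := hprop h₀ (hirr o h₀ hoh)
          rw [ENNReal.ofReal_eq_zero, hWfH h₀ hh₀] at h1
          linarith
      -- endgame
      have hWi0 : c ≤ 1 - gr i₀ / s := hWc i₀
      have hgrn : gr i₀ = max (y n i₀ - (m i₀).toReal) 0 := hgrnH i₀ hi₀H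
      clear_value c Wf gr s
      have h2 : gr i₀ / s ≤ 0 := by linarith
      have h3 := (div_le_iff₀ hspos).1 h2
      have hgr_pos : 0 < gr i₀ := by
        rw [hgrn]
        exact lt_max_iff.2 (Or.inl (by linarith))
      nlinarith
    have hle : (⨆ n, ⨆ i, ⨆ _ : i ∉ H, ((y n i : ℝ) : EReal))
        ≤ (((⨆ i, m i).toReal : ℝ) : EReal) := by
      refine iSup_le fun n => iSup_le fun i => iSup_le fun hiH => ?_
      exact EReal.coe_le_coe_iff.2 ((key n i hiH).trans (ENNReal.toReal_mono htop (le_iSup m i)))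
    rw [hy2] at hle
    exact EReal.coe_ne_top _ (top_le_iff.1 hle)
end
end

section
/- Let Q be an irreducible regular Q-matrix on a countable set E whose embedding chain Π is recurrent, let H be a nonempty finite subset of E, and suppose the Q-process is ℓ-ergodic for some integer ℓ ≥ 0. Then the Q-process is not (ℓ+1)-ergodic if and only if there exists a sequence of functions y⁽ⁿ⁾ : E → ℝ (n ≥ 1) such that: (1) for each n, sup_{i∈E} y⁽ⁿ⁾(i) < ∞ and y⁽ⁿ⁾(i) ≤ Σ_{j∉H} Π(i,j)·y⁽ⁿ⁾(j) + ((ℓ+1)/q_i)·𝔼_i σ_H^ℓ for every i ∈ E; and (2) sup_{n≥1} max_{i∈H} y⁽ⁿ⁾(i) = ∞. -/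
open scoped ENNReal NNReal BigOperators Classical Topology
open Filter Set

noncomputable section

namespace MyAux

variable {ι : Type*}

lemma tsum_sub' {f g : ι → ℝ≥0∞} (h1 : (∑' i, g i) ≠ ⊤) (h2 : ∀ i, g i ≤ f i) :
    (∑' i, (f i - g i)) = (∑' i, f i) - (∑' i, g i) := by
  have hf : (∑' i, f i) = (∑' i, (f i - g i)) + (∑' i, g i) := by
    rw [← ENNReal.tsum_add]
    exact tsum_congr fun i => (tsub_add_cancel_of_le (h2 i)).symm
  rw [hf, ENNReal.add_sub_cancel_right h1]

lemma tsum_iSup_mono {f : ℕ → ι → ℝ≥0∞} (hf : Monotone f) :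
    (∑' j, ⨆ n, f n j) = ⨆ n, ∑' j, f n j := by
  refine le_antisymm ?_ (iSup_le fun n => Summable.tsum_le_tsum (fun j => le_iSup (fun n => f n j) n)
    ENNReal.summable ENNReal.summable)
  rw [ENNReal.tsum_eq_iSup_sum]
  refine iSup_le fun s => ?_
  rw [ENNReal.finsetSum_iSup_of_monotone (fun a => fun n m hnm => hf hnm a)]
  exact iSup_le fun n => le_iSup_of_le n (ENNReal.sum_le_tsum s)

section Avoid
variable {E : Type*}

def avoid (K : E → E → ℝ≥0∞) : ℕ → E → ℝ≥0∞
  | 0 => fun _ => 1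
  | k + 1 => fun i => ∑' j, K i j * avoid K k j

variable {K : E → E → ℝ≥0∞} (hK : ∀ i, (∑' j, K i j) ≤ 1)
include hK

lemma avoid_le_one : ∀ k i, avoid K k i ≤ 1 := by
  intro k
  induction k with
  | zero => intro i; simp [avoid]
  | succ k ih =>
    intro i
    calc (∑' j, K i j * avoid K k j) ≤ ∑' j, K i j * 1 :=
          Summable.tsum_le_tsum (fun j => mul_le_mul_right (ih j) _) ENNReal.summable ENNReal.summable
      _ ≤ 1 := by simpa using hK i

lemma avoid_succ_le : ∀ k, ∀ i, avoid K (k + 1) i ≤ avoid K k i := by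
  intro k
  induction k with
  | zero => intro i; exact avoid_le_one hK 1 i
  | succ k ih =>
    intro i
    exact Summable.tsum_le_tsum (fun j => mul_le_mul_right (ih j) _) ENNReal.summable ENNReal.summable

lemma avoid_antitone : Antitone (avoid K) :=
  antitone_nat_of_succ_le fun k => fun i => avoid_succ_le hK k i

lemma K_ne_top (i j : E) : K i j ≠ ⊤ :=
  fun h => by simpa [h] using (ENNReal.le_tsum (f := K i) j).trans (hK i)

/-- dominated decreasing convergence for ∑ K(i,j) t_k(j). -/
lemma iInf_tsum_mul {t : ℕ → E → ℝ≥0∞} (ht1 : ∀ k j, t k j ≤ 1) (hta : Antitone t) (i : E) :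
    (⨅ k, ∑' j, K i j * t k j) = ∑' j, K i j * ⨅ k, t k j := by
  set u : ℕ → E → ℝ≥0∞ := fun k j => 1 - t k j with hu
  have hut : ∀ k j, t k j = 1 - u k j := fun k j =>
    (ENNReal.sub_sub_cancel (by norm_num) (ht1 k j)).symm
  have hmulsub : ∀ (a : ℝ≥0∞) (v : ℝ≥0∞), a ≠ ⊤ → a * (1 - v) = a - a * v := by
    intro a v ha
    rw [ENNReal.mul_sub (fun _ _ => ha), mul_one]
  have hKt : ∀ i j, K i j ≠ ⊤ := K_ne_top hK
  have hCne : (∑' j, K i j) ≠ ⊤ := (hK i).trans_lt (by norm_num) |>.ne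
  have hmu : ∀ a b : ℝ≥0∞, b ≤ 1 → a * b ≤ a := fun a b hb =>
    (mul_le_mul_right hb a).trans_eq (mul_one a)
  have hKu_le : ∀ (w : E → ℝ≥0∞), (∀ j, w j ≤ 1) → (∑' j, K i j * w j) ≤ ∑' j, K i j :=
    fun w hw => Summable.tsum_le_tsum (fun j => hmu _ _ (hw j))
      ENNReal.summable ENNReal.summable
  have key : ∀ k, (∑' j, K i j * t k j) = (∑' j, K i j) - (∑' j, K i j * u k j) := by
    intro k
    have : ∀ j, K i j * t k j = K i j - K i j * u k j := by
      intro j; rw [hut k j, hmulsub _ _ (hKt i j)]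
    rw [tsum_congr this, tsum_sub' (((hKu_le (u k) (fun j => tsub_le_self)).trans_lt
      (lt_of_le_of_ne le_top hCne)).ne) (fun j => hmu _ _ tsub_le_self)]
  have humono : Monotone u := fun a b hab j => tsub_le_tsub_left (hta hab j) 1
  have hKumono : Monotone (fun k => fun j => K i j * u k j) :=
    fun a b hab j => mul_le_mul_right (humono hab j) _
  calc (⨅ k, ∑' j, K i j * t k j) = ⨅ k, ((∑' j, K i j) - (∑' j, K i j * u k j)) := by
        simp_rw [key]
    _ = (∑' j, K i j) - ⨆ k, (∑' j, K i j * u k j) := (ENNReal.sub_iSup hCne).symm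
    _ = (∑' j, K i j) - (∑' j, ⨆ k, K i j * u k j) := by rw [tsum_iSup_mono hKumono]
    _ = (∑' j, K i j) - (∑' j, K i j * ⨆ k, u k j) := by simp_rw [ENNReal.mul_iSup]
    _ = ∑' j, (K i j - K i j * ⨆ k, u k j) := by
        rw [tsum_sub' (((hKu_le _ (fun j => iSup_le fun k => tsub_le_self)).trans_lt
          (lt_of_le_of_ne le_top hCne)).ne)
          (fun j => hmu _ _ (iSup_le fun k => tsub_le_self))]
    _ = ∑' j, K i j * ⨅ k, t k j := by
        refine tsum_congr fun j => ?_
        rw [← hmulsub _ _ (hKt i j)]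
        congr 1
        simp_rw [hut]
        exact ENNReal.sub_iSup (f := fun k => u k j) ENNReal.one_ne_top

lemma iInf_avoid_fixed (i : E) :
    (⨅ k, avoid K k i) = ∑' j, K i j * ⨅ k, avoid K k j := by
  have hshift : (⨅ k, avoid K k i) = ⨅ k, avoid K (k + 1) i := by
    refine le_antisymm (le_iInf fun k => iInf_le _ (k + 1)) (le_iInf fun k =>
      (iInf_le _ k).trans (avoid_antitone hK (Nat.le_succ k) i))
  rw [hshift]
  exact iInf_tsum_mul hK (fun k j => avoid_le_one hK k j) (avoid_antitone hK) i

omit hK in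
lemma le_iInf_avoid {z : E → ℝ≥0∞} (hz1 : ∀ i, z i ≤ 1)
    (hz : ∀ i, z i ≤ ∑' j, K i j * z j) : ∀ i, z i ≤ ⨅ k, avoid K k i := by
  have : ∀ k i, z i ≤ avoid K k i := by
    intro k
    induction k with
    | zero => exact hz1
    | succ k ih =>
      intro i
      exact (hz i).trans (Summable.tsum_le_tsum (fun j => mul_le_mul_right (ih j) _)
        ENNReal.summable ENNReal.summable)
  exact fun i => le_iInf fun k => this k i

omit hK in
lemma avoid_mono_kernel {K' : E → E → ℝ≥0∞} (hKK : ∀ i j, K i j ≤ K' i j) :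
    ∀ k i, avoid K k i ≤ avoid K' k i := by
  intro k
  induction k with
  | zero => intro i; exact le_rfl
  | succ k ih =>
    intro i
    exact Summable.tsum_le_tsum (fun j => mul_le_mul' (hKK i j) (ih j)) ENNReal.summable ENNReal.summable

end Avoid

section MinSol
variable {ι : Type*} (A : ι → ι → ℝ≥0∞) (g : ι → ℝ≥0∞)

def iterSol : ℕ → ι → ℝ≥0∞
  | 0 => fun _ => 0
  | k + 1 => fun i => (∑' j, A i j * iterSol k j) + g i

lemma iterSol_mono : Monotone (iterSol A g) := by
  refine monotone_nat_of_le_succ ?_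
  intro k
  induction k with
  | zero => intro i; exact zero_le
  | succ k ih =>
    intro i
    exact add_le_add_left (Summable.tsum_le_tsum (fun j => mul_le_mul_right (ih j) _)
      ENNReal.summable ENNReal.summable) _

lemma isMinSol_iSup_iterSol : IsMinSol A g (fun i => ⨆ k, iterSol A g k i) := by
  constructor
  · intro i
    have h1 : (⨆ k, iterSol A g k i) = ⨆ k, iterSol A g (k + 1) i :=
      le_antisymm (iSup_le fun k => (iterSol_mono A g (Nat.le_succ k) i).trans
        (le_iSup (fun k => iterSol A g (k + 1) i) k)) (iSup_le fun k => le_iSup (fun k => iterSol A g k i) (k + 1))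
    show (⨆ k, iterSol A g k i) = (∑' j, A i j * ⨆ k, iterSol A g k j) + g i
    rw [h1]
    show (⨆ k, (∑' j, A i j * iterSol A g k j) + g i) = _
    rw [← ENNReal.iSup_add, ← tsum_iSup_mono (f := fun k j => A i j * iterSol A g k j)
      (fun a b hab j => mul_le_mul_right (iterSol_mono A g hab j) _)]
    congr 1
    exact tsum_congr fun j => (ENNReal.mul_iSup _ _).symm
  · intro y hy i
    refine iSup_le fun k => ?_
    induction k generalizing i with
    | zero => exact zero_le
    | succ k ih =>
      rw [hy i]
      exact add_le_add_left (Summable.tsum_le_tsum (fun j => mul_le_mul_right (ih j) _)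
        ENNReal.summable ENNReal.summable) _

end MinSol

section Embed
variable {E : Type*} {q : E → E → ℝ} (hq : IsQMatrix q)
include hq

omit hq in
lemma embed_ne_top (i j : E) : embed q i j ≠ ⊤ := by
  unfold embed; split <;> simp

lemma embed_rowsum (i : E) : (∑' j, embed q i j) = 1 := by
  have h1 : ∀ j, embed q i j = ENNReal.ofReal ((if j = i then 0 else q i j) / (-q i i)) := by
    intro j
    unfold embed
    split <;> simp_all
  have hnn : ∀ j, 0 ≤ (if j = i then 0 else q i j) / (-q i i) := by
    intro j
    apply div_nonneg _ (hq.diag_neg i).le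
    split
    · exact le_rfl
    · exact hq.offdiag_nonneg i j (by tauto)
  have hsum : HasSum (fun j => (if j = i then 0 else q i j) / (-q i i)) ((-q i i) / (-q i i)) :=
    (hq.row_hasSum i).div_const _
  rw [tsum_congr h1, ← ENNReal.ofReal_tsum_of_nonneg hnn hsum.summable, hsum.tsum_eq,
    div_self (hq.diag_neg i).ne']
  simp

lemma embed_rowsum_le (i : E) : (∑' j, embed q i j) ≤ 1 := (embed_rowsum hq i).le

lemma embed_pos {i j : E} (hij : j ≠ i) (hpos : 0 < q i j) : 0 < embed q i j := by
  unfold embed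
  rw [if_neg hij]
  exact ENNReal.ofReal_pos.2 (div_pos hpos (hq.diag_neg i))

lemma q_edge_ne {a b : E} (h : 0 < q a b) : b ≠ a := by
  rintro rfl
  have := hq.diag_neg b
  linarith

/-- killed kernel has row sums ≤ 1 -/
lemma killed_rowsum_le (S : Set E) (i : E) :
    (∑' j, (if j ∈ S then 0 else embed q i j)) ≤ 1 := by
  refine le_trans (Summable.tsum_le_tsum (fun j => ?_) ENNReal.summable ENNReal.summable)
    (embed_rowsum_le hq i)
  split
  · exact zero_le
  · exact le_rfl

end Embed


section RecAt
variable {E : Type*} {q : E → E → ℝ} (hq : IsQMatrix q)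

def killed (q : E → E → ℝ) (S : Set E) : E → E → ℝ≥0∞ :=
  fun i j => if j ∈ S then 0 else embed q i j

include hq

lemma killed_rowsum_le' (S : Set E) (i : E) : (∑' j, killed q S i j) ≤ 1 :=
  killed_rowsum_le hq S i

lemma iInf_avoid_killed_singleton_eq_zero {o : E} (hro : RecurrentAt (embed q) o) :
    ∀ i, (⨅ k, avoid (killed q {o}) k i) = 0 := by
  classical
  set K := killed q {o} with hKdef
  have hKo : ∀ i j, K i j = if j = o then 0 else embed q i j := by
    intro i j; simp [hKdef, killed, Set.mem_singleton_iff]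
  have hKrow : ∀ i, (∑' j, K i j) ≤ 1 := killed_rowsum_le hq {o}
  set A : {i : E // i ≠ o} → {i : E // i ≠ o} → ℝ≥0∞ := fun i j => embed q i.1 j.1 with hA
  set gg : {i : E // i ≠ o} → ℝ≥0∞ := fun i => embed q i.1 o with hgg
  have hone : ∀ i, (⨆ k, iterSol A gg k i) = 1 := hro _ (isMinSol_iSup_iterSol A gg)
  have key : ∀ k (i : {i : E // i ≠ o}), iterSol A gg k i + avoid K k i.1 = 1 := by
    intro k
    induction k with
    | zero => intro i; simp [iterSol, avoid]
    | succ k ih =>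
      intro i
      show ((∑' j, A i j * iterSol A gg k j) + gg i) + (∑' j, K i.1 j * avoid K k j) = 1
      have hsub : (∑' j : {i : E // i ≠ o}, A i j * iterSol A gg k j)
          = ∑' j : E, K i.1 j * (if h : j = o then 0 else iterSol A gg k ⟨j, h⟩) := by
        rw [← tsum_subtype_eq_of_support_subset
          (s := {j : E | j ≠ o})
          (f := fun j => K i.1 j * (if h : j = o then 0 else iterSol A gg k ⟨j, h⟩)) ?_]
        · refine tsum_congr fun j => ?_
          have hj : j.1 ≠ o := j.2
          rw [hKo, if_neg hj, dif_neg hj]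
        · intro j hj
          simp only [Function.mem_support] at hj
          intro hjo
          apply hj
          rw [hjo, hKo, if_pos rfl, zero_mul]
      rw [hsub]
      rw [add_comm _ (gg i), add_assoc, ← ENNReal.tsum_add]
      have hterm : (∑' j : E, (K i.1 j * (if h : j = o then 0 else iterSol A gg k ⟨j, h⟩)
          + K i.1 j * avoid K k j)) = ∑' j : E, K i.1 j := by
        refine tsum_congr fun j => ?_
        by_cases hj : j = o
        · rw [hKo, if_pos hj]; simp
        · rw [← mul_add, dif_neg hj]
          have := ih ⟨j, hj⟩
          show K i.1 j * (iterSol A gg k ⟨j, hj⟩ + avoid K k j) = K i.1 j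
          rw [this, mul_one]
      rw [hterm]
      have hsplit := ENNReal.tsum_eq_add_tsum_ite (f := embed q i.1) o
      have : (∑' j : E, K i.1 j) = ∑' j : E, if j = o then 0 else embed q i.1 j :=
        tsum_congr fun j => hKo i.1 j
      rw [this]
      show gg i + _ = 1
      rw [hgg, ← hsplit]
      exact embed_rowsum hq i.1
  have hne : ∀ (i : E), i ≠ o → (⨅ k, avoid K k i) = 0 := by
    intro i hi
    have h1 : ∀ k, avoid K k i = 1 - iterSol A gg k ⟨i, hi⟩ := by
      intro k
      have hk := key k ⟨i, hi⟩
      have hiter_ne : iterSol A gg k ⟨i, hi⟩ ≠ ⊤ := by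
        intro h
        rw [h] at hk
        simp at hk
      refine ENNReal.eq_sub_of_add_eq hiter_ne ?_
      rw [add_comm]
      exact hk
    simp_rw [h1]
    rw [← ENNReal.sub_iSup (f := fun k => iterSol A gg k ⟨i, hi⟩) ENNReal.one_ne_top,
      hone ⟨i, hi⟩, tsub_self]
  intro i
  by_cases hi : i = o
  · subst hi
    rw [iInf_avoid_fixed hKrow i]
    have : ∀ j, K i j * (⨅ k, avoid K k j) = 0 := by
      intro j
      by_cases hj : j = i
      · rw [hKo, if_pos hj, zero_mul]
      · rw [hne j hj, mul_zero]
    rw [tsum_congr this, tsum_zero]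
  · exact hne i hi

end RecAt


section Solidarity
variable {E : Type*} {q : E → E → ℝ}

lemma exists_ne_state (hq : IsQMatrix q) (i : E) : ∃ a : E, a ≠ i := by
  by_contra hcon
  push_neg at hcon
  have h0 : (fun j => if j = i then 0 else q i j) = fun _ => (0 : ℝ) :=
    funext fun j => if_pos (hcon j)
  have h1 := hq.row_hasSum i
  rw [h0] at h1
  have h2 := h1.unique hasSum_zero
  have := hq.diag_neg i
  rw [h2] at this
  exact lt_irrefl 0 this

lemma iInf_avoid_killed_single (hq : IsQMatrix q) (hirr : MatIrreducible q) {o : E}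
    (hro : RecurrentAt (embed q) o) (h : E) :
    ∀ i, (⨅ k, avoid (killed q {h}) k i) = 0 := by
  classical
  have hProw : ∀ i, (∑' j, embed q i j) = 1 := embed_rowsum hq
  have hPt : ∀ i j, embed q i j ≠ ⊤ := embed_ne_top (q := q)
  set p : E → E → ℝ := fun i j => (embed q i j).toReal with hp
  have hpnn : ∀ i j, 0 ≤ p i j := fun i j => ENNReal.toReal_nonneg
  have hpsum : ∀ i, Summable (p i) := fun i =>
    ENNReal.summable_toReal (by rw [hProw i]; exact ENNReal.one_ne_top)
  have hpsum1 : ∀ i, (∑' j, p i j) = 1 := by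
    intro i
    rw [hp, ← ENNReal.tsum_toReal_eq (hPt i), hProw i, ENNReal.toReal_one]
  have hpofReal : ∀ i j, ENNReal.ofReal (p i j) = embed q i j := fun i j =>
    ENNReal.ofReal_toReal (hPt i j)
  set Kh := killed q {h} with hKhdef
  have hKh : ∀ i j, Kh i j = if j = h then 0 else embed q i j := by
    intro i j; simp [hKhdef, killed, Set.mem_singleton_iff]
  have hKhrow := killed_rowsum_le hq ({h} : Set E)
  set s : E → ℝ≥0∞ := fun i => ⨅ k, avoid Kh k i with hsdef
  have hs1 : ∀ i, s i ≤ 1 := fun i => (iInf_le _ 0).trans le_rfl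
  have hst : ∀ i, s i ≠ ⊤ := fun i => ((hs1 i).trans_lt (by norm_num)).ne
  have hsfix : ∀ i, s i = ∑' j, Kh i j * s j := iInf_avoid_fixed hKhrow
  set s' : E → ℝ := fun i => (s i).toReal with hs'
  have hs'nn : ∀ i, 0 ≤ s' i := fun i => ENNReal.toReal_nonneg
  have hs'le1 : ∀ i, s' i ≤ 1 := by
    intro i
    have := ENNReal.toReal_mono ENNReal.one_ne_top (hs1 i)
    simpa using this
  set kh : E → E → ℝ := fun i j => if j = h then 0 else p i j with hkh
  have hkhnn : ∀ i j, 0 ≤ kh i j := by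
    intro i j; rw [hkh]; dsimp only; split
    · exact le_rfl
    · exact hpnn i j
  have hkh_le_p : ∀ i j, kh i j ≤ p i j := by
    intro i j; rw [hkh]; dsimp only; split
    · exact hpnn i j
    · exact le_rfl
  have hkhsum : ∀ i, Summable (kh i) := fun i =>
    Summable.of_nonneg_of_le (hkhnn i) (hkh_le_p i) (hpsum i)
  have hkhs'sum : ∀ i, Summable (fun j => kh i j * s' j) := by
    intro i
    refine Summable.of_nonneg_of_le (fun j => mul_nonneg (hkhnn i j) (hs'nn j))
      (fun j => ?_) (hkhsum i)
    calc kh i j * s' j ≤ kh i j * 1 := by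
          exact mul_le_mul_of_nonneg_left (hs'le1 j) (hkhnn i j)
      _ = kh i j := mul_one _
  have hrfix : ∀ i, s' i = ∑' j, kh i j * s' j := by
    intro i
    have h1 : s' i = ∑' j, (Kh i j * s j).toReal := by
      rw [hs']
      dsimp only
      rw [hsfix i]
      have hKt : ∀ j, Kh i j ≠ ⊤ := by
        intro j
        rw [hKh]
        split
        · exact ENNReal.zero_ne_top
        · exact hPt i j
      exact ENNReal.tsum_toReal_eq fun j => ENNReal.mul_ne_top (hKt j) (hst j)
    rw [h1]
    refine tsum_congr fun j => ?_
    rw [hKh, hkh]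
    dsimp only
    split
    · simp
    · rw [ENNReal.toReal_mul]
  -- maximality at o: any subinvariant z ≤ 1 for the o-killed kernel vanishes
  have hmaxO : ∀ z : E → ℝ≥0∞, (∀ i, z i ≤ 1) →
      (∀ i, z i ≤ ∑' j, killed q ({o} : Set E) i j * z j) → ∀ i, z i = 0 := by
    intro z h1 h2 i
    have h3 := le_iInf_avoid (K := killed q ({o} : Set E)) h1 h2 i
    rw [iInf_avoid_killed_singleton_eq_zero hq hro i] at h3
    exact le_antisymm h3 (zero_le)
  set ko : E → E → ℝ := fun i j => if j = o then 0 else p i j with hko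
  have hkonn : ∀ i j, 0 ≤ ko i j := by
    intro i j; rw [hko]; dsimp only; split
    · exact le_rfl
    · exact hpnn i j
  have hkosum : ∀ i, Summable (ko i) := by
    intro i
    refine Summable.of_nonneg_of_le (hkonn i) (fun j => ?_) (hpsum i)
    rw [hko]; dsimp only; split
    · exact hpnn i j
    · exact le_rfl
  have hkosum1 : ∀ i, (∑' j, ko i j) = 1 - p i o := by
    intro i
    have := Summable.tsum_eq_add_tsum_ite (hpsum i) o
    rw [hpsum1 i] at this
    rw [hko]
    dsimp only
    linarith [this]
  -- key splitting identity : ∑ p s' = s' i + p i h * s' h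
  have hsplit_h : ∀ i, (∑' j, p i j * s' j) = s' i + p i h * s' h := by
    intro i
    have hsm : Summable (fun j => p i j * s' j) := by
      refine Summable.of_nonneg_of_le (fun j => mul_nonneg (hpnn i j) (hs'nn j))
        (fun j => ?_) (hpsum i)
      calc p i j * s' j ≤ p i j * 1 := mul_le_mul_of_nonneg_left (hs'le1 j) (hpnn i j)
        _ = p i j := mul_one _
    have h1 := Summable.tsum_eq_add_tsum_ite hsm h
    have h2 : (∑' j, if j = h then 0 else p i j * s' j) = ∑' j, kh i j * s' j := by
      refine tsum_congr fun j => ?_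
      rw [hkh]; dsimp only; split
      · simp
      · rfl
    rw [h2, ← hrfix i] at h1
    rw [h1]
    ring
  by_cases hB : ∃ i1, s o < s i1
  · -- Case B : build a nonzero subinvariant for the o-killed chain; contradiction
    exfalso
    obtain ⟨i1, hi1⟩ := hB
    set z : E → ℝ := fun j => max (s' j - s' o) 0 with hz
    have hznn : ∀ j, 0 ≤ z j := fun j => le_max_right _ _
    have hzle1 : ∀ j, z j ≤ 1 := by
      intro j
      rw [hz]; dsimp only
      refine max_le (by linarith [hs'le1 j, hs'nn o]) zero_le_one
    have hzsum : ∀ i, Summable (fun j => ko i j * z j) := by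
      intro i
      refine Summable.of_nonneg_of_le (fun j => mul_nonneg (hkonn i j) (hznn j))
        (fun j => ?_) (hkosum i)
      calc ko i j * z j ≤ ko i j * 1 := mul_le_mul_of_nonneg_left (hzle1 j) (hkonn i j)
        _ = ko i j := mul_one _
    have hkos'sum : ∀ i, Summable (fun j => ko i j * s' j) := by
      intro i
      refine Summable.of_nonneg_of_le (fun j => mul_nonneg (hkonn i j) (hs'nn j))
        (fun j => ?_) (hkosum i)
      calc ko i j * s' j ≤ ko i j * 1 := mul_le_mul_of_nonneg_left (hs'le1 j) (hkonn i j)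
        _ = ko i j := mul_one _
    -- ∑ ko s' = s' i + p i h s' h - p i o s' o
    have hkos' : ∀ i, (∑' j, ko i j * s' j) = s' i + p i h * s' h - p i o * s' o := by
      intro i
      have hsm : Summable (fun j => p i j * s' j) := by
        refine Summable.of_nonneg_of_le (fun j => mul_nonneg (hpnn i j) (hs'nn j))
          (fun j => ?_) (hpsum i)
        calc p i j * s' j ≤ p i j * 1 := mul_le_mul_of_nonneg_left (hs'le1 j) (hpnn i j)
          _ = p i j := mul_one _
      have h1 := Summable.tsum_eq_add_tsum_ite hsm o
      have h2 : (∑' j, if j = o then 0 else p i j * s' j) = ∑' j, ko i j * s' j := by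
        refine tsum_congr fun j => ?_
        rw [hko]; dsimp only; split
        · simp
        · rfl
      rw [h2, hsplit_h i] at h1
      linarith [h1]
    -- real subinvariance of z
    have hzsub : ∀ i, z i ≤ ∑' j, ko i j * z j := by
      intro i
      have hlow : (∑' j, ko i j * (s' j - s' o)) ≤ ∑' j, ko i j * z j := by
        refine Summable.tsum_le_tsum (fun j => ?_) ?_ (hzsum i)
        · exact mul_le_mul_of_nonneg_left (le_max_left _ _) (hkonn i j)
        · exact ((hkos'sum i).sub ((hkosum i).mul_right (s' o)))
            |>.congr (fun j => by ring)
      have hnn : (0:ℝ) ≤ ∑' j, ko i j * z j :=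
        tsum_nonneg fun j => mul_nonneg (hkonn i j) (hznn j)
      have hcompute : (∑' j, ko i j * (s' j - s' o))
          = (s' i - s' o) + p i h * s' h := by
        have : (∑' j, ko i j * (s' j - s' o))
            = (∑' j, ko i j * s' j) - (∑' j, ko i j) * s' o := by
          rw [← tsum_mul_right]
          rw [← Summable.tsum_sub (hkos'sum i) ((hkosum i).mul_right (s' o))]
          exact tsum_congr fun j => by ring
        rw [this, hkos' i, hkosum1 i]
        ring
      have h5 : s' i - s' o ≤ ∑' j, ko i j * (s' j - s' o) := by
        rw [hcompute]
        have := mul_nonneg (hpnn i h) (hs'nn h)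
        linarith
      rw [hz]; dsimp only
      exact max_le (h5.trans hlow) hnn
    -- promote to ℝ≥0∞ and apply maximality
    have hZ : ∀ i, ENNReal.ofReal (z i) = 0 := by
      refine hmaxO (fun j => ENNReal.ofReal (z j)) (fun i => ?_) (fun i => ?_)
      · rw [← ENNReal.ofReal_one]
        exact ENNReal.ofReal_le_ofReal (hzle1 i)
      · have h1 : ENNReal.ofReal (z i) ≤ ENNReal.ofReal (∑' j, ko i j * z j) :=
          ENNReal.ofReal_le_ofReal (hzsub i)
        refine h1.trans ?_
        rw [ENNReal.ofReal_tsum_of_nonneg (fun j => mul_nonneg (hkonn i j) (hznn j)) (hzsum i)]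
        refine Summable.tsum_le_tsum (fun j => ?_) ENNReal.summable ENNReal.summable
        rw [ENNReal.ofReal_mul (hkonn i j)]
        refine mul_le_mul' ?_ le_rfl
        rw [hko]; dsimp only
        split
        · simp [killed]
        · rw [hpofReal i j]
          have : killed q ({o} : Set E) i j = if j = o then 0 else embed q i j := by
            simp [killed, Set.mem_singleton_iff]
          rw [this, if_neg ‹¬ j = o›]
    have hz1 : 0 < z i1 := by
      rw [hz]; dsimp only
      have : s' o < s' i1 :=
        ENNReal.toReal_strict_mono (hst i1) hi1
      exact lt_max_of_lt_left (by linarith)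
    have := hZ i1
    rw [ENNReal.ofReal_eq_zero] at this
    linarith
  · -- Case A : s attains its maximum at o
    push_neg at hB
    by_cases hso : s o = 0
    · intro i
      exact le_antisymm ((hB i).trans_eq hso) (zero_le)
    · exfalso
      have hs'opos : 0 < s' o := ENNReal.toReal_pos hso (hst o)
      have hs'le : ∀ i, s' i ≤ s' o := fun i => ENNReal.toReal_mono (hst o) (hB i)
      -- the set where s equals its max is closed under positive transitions
      set G : Set E := {i | s' i = s' o} with hG
      have hkey : ∀ i ∈ G, p i h = 0 ∧ ∀ j, j ≠ h → 0 < p i j → j ∈ G := by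
        intro i hiG
        have hiG' : s' i = s' o := hiG
        have hbound : ∀ j0, j0 ≠ h → (∑' j, kh i j * s' j)
            ≤ kh i j0 * s' j0 + (1 - p i h - kh i j0) * s' o := by
          intro j0 hj0
          have h1 := Summable.tsum_eq_add_tsum_ite (hkhs'sum i) j0
          have h2 : (∑' j, if j = j0 then 0 else kh i j * s' j)
              ≤ (1 - p i h - kh i j0) * s' o := by
            have hkh1 : (∑' j, kh i j) = 1 - p i h := by
              have := Summable.tsum_eq_add_tsum_ite (hpsum i) h
              rw [hpsum1 i] at this
              have h3 : (∑' j, if j = h then 0 else p i j) = ∑' j, kh i j := by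
                refine tsum_congr fun j => ?_
                rw [hkh]
              rw [h3] at this
              linarith
            have hkh2 : (∑' j, if j = j0 then 0 else kh i j) = 1 - p i h - kh i j0 := by
              have := Summable.tsum_eq_add_tsum_ite (hkhsum i) j0
              rw [hkh1] at this
              linarith
            rw [← hkh2, ← tsum_mul_right]
            refine Summable.tsum_le_tsum (fun j => ?_) ?_ ?_
            · by_cases hjj : j = j0
              · simp [hjj]
              · rw [if_neg hjj, if_neg hjj]
                by_cases hjh : j = h
                · rw [hkh]; dsimp only; rw [if_pos hjh]; simp
                · refine mul_le_mul_of_nonneg_left (hs'le j) (hkhnn i j)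
            · refine Summable.of_nonneg_of_le (fun j => ?_) (fun j => ?_) (hkhsum i)
              · by_cases hjj : j = j0
                · rw [if_pos hjj]
                · rw [if_neg hjj]; exact mul_nonneg (hkhnn i j) (hs'nn j)
              · by_cases hjj : j = j0
                · rw [if_pos hjj]; exact hkhnn i j
                · rw [if_neg hjj]
                  calc kh i j * s' j ≤ kh i j * 1 :=
                      mul_le_mul_of_nonneg_left (hs'le1 j) (hkhnn i j)
                    _ = kh i j := mul_one _
            · refine Summable.of_nonneg_of_le (fun j => ?_) (fun j => ?_)
                ((hkhsum i).mul_right (s' o))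
              · refine mul_nonneg ?_ (hs'nn o)
                by_cases hjj : j = j0
                · rw [if_pos hjj]
                · rw [if_neg hjj]; exact hkhnn i j
              · refine mul_le_mul_of_nonneg_right ?_ (hs'nn o)
                by_cases hjj : j = j0
                · rw [if_pos hjj]; exact hkhnn i j
                · rw [if_neg hjj]
          calc (∑' j, kh i j * s' j) = kh i j0 * s' j0 + ∑' j, if j = j0 then 0
              else kh i j * s' j := h1
            _ ≤ kh i j0 * s' j0 + (1 - p i h - kh i j0) * s' o := by linarith [h2]
        -- first : p i h = 0
        have hpih : p i h = 0 := by
          by_contra hne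
          have hpos : 0 < p i h := lt_of_le_of_ne (hpnn i h) (Ne.symm hne)
          -- bound with j0 := i is awkward; directly bound the full sum
          have hb : (∑' j, kh i j * s' j) ≤ (1 - p i h) * s' o := by
            have hkh1 : (∑' j, kh i j) = 1 - p i h := by
              have := Summable.tsum_eq_add_tsum_ite (hpsum i) h
              rw [hpsum1 i] at this
              have h3 : (∑' j, if j = h then 0 else p i j) = ∑' j, kh i j := by
                refine tsum_congr fun j => ?_
                rw [hkh]
              rw [h3] at this
              linarith
            rw [← hkh1, ← tsum_mul_right]
            refine Summable.tsum_le_tsum (fun j => mul_le_mul_of_nonneg_left (hs'le j) (hkhnn i j))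
              (hkhs'sum i) ((hkhsum i).mul_right (s' o))
          rw [← hrfix i, hiG'] at hb
          nlinarith
        refine ⟨hpih, fun j0 hj0h hj0pos => ?_⟩
        have hb := hbound j0 hj0h
        rw [← hrfix i, hiG', hpih] at hb
        have hkhj0 : kh i j0 = p i j0 := by rw [hkh]; dsimp only; rw [if_neg hj0h]
        rw [hkhj0] at hb
        have : s' o ≤ s' j0 := by nlinarith
        exact le_antisymm (hs'le j0) this
      -- G is closed under q-positive edges
      have hclosed : ∀ i ∈ G, ∀ j, 0 < q i j → j ∈ G := by
        intro i hiG j hqij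
        have hji : j ≠ i := q_edge_ne hq hqij
        have hpij : 0 < p i j := by
          rw [hp]
          exact ENNReal.toReal_pos (embed_pos hq hji hqij).ne' (hPt i j)
        by_cases hjh : j = h
        · exfalso
          have := (hkey i hiG).1
          rw [← hjh] at this
          rw [this] at hpij
          exact lt_irrefl 0 hpij
        · exact (hkey i hiG).2 j hjh hpij
      have hGo : o ∈ G := rfl
      have hGtrans : ∀ i, Relation.TransGen (fun a b => 0 < q a b) o i → i ∈ G := by
        intro i htg
        induction htg with
        | single hr => exact hclosed o hGo _ hr
        | tail _ hr ih => exact hclosed _ ih _ hr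
      have hGall : ∀ i, i ∈ G := by
        intro i
        by_cases hio : i = o
        · rw [hio]; exact hGo
        · exact hGtrans i (hirr o i (Ne.symm hio))
      -- some state has a positive rate into h, contradiction with p · h = 0 on G
      obtain ⟨a, ha⟩ := exists_ne_state hq h
      obtain ⟨b, -, hbh⟩ := Relation.TransGen.tail'_iff.mp (hirr a h ha)
      have hbG := hGall b
      have := (hkey b hbG).1
      have hpbh : 0 < p b h := by
        rw [hp]
        exact ENNReal.toReal_pos (embed_pos hq (q_edge_ne hq hbh) hbh).ne' (hPt b h)
      rw [this] at hpbh
      exact lt_irrefl 0 hpbh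

end Solidarity


section Final
variable {E : Type*} {q : E → E → ℝ}

lemma iInf_avoid_killed_H (hq : IsQMatrix q) (hirr : MatIrreducible q) {o : E}
    (hro : RecurrentAt (embed q) o) {H : Set E} {h : E} (hh : h ∈ H) (i : E) :
    (⨅ k, avoid (killed q H) k i) = 0 := by
  refine le_antisymm ?_ (zero_le)
  rw [← iInf_avoid_killed_single hq hirr hro h i]
  refine le_iInf fun k => (iInf_le _ k).trans (avoid_mono_kernel (K := killed q H)
    (K' := killed q {h}) ?_ k i)
  intro a b
  unfold killed
  by_cases hb : b ∈ ({h} : Set E)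
  · have : b ∈ H := by
      rw [Set.mem_singleton_iff] at hb
      rw [hb]; exact hh
    rw [if_pos hb, if_pos this]
  · rw [if_neg hb]
    split
    · exact zero_le
    · exact le_rfl

end Final


def ennEREAL : ℝ≥0∞ →+ EReal := ⟨⟨(↑), EReal.coe_ennreal_zero⟩, EReal.coe_ennreal_add⟩

lemma hasSum_erealCoe {ι : Type*} (h : ι → ℝ≥0∞) :
    HasSum (fun j => (h j : EReal)) ((∑' j, h j : ℝ≥0∞) : EReal) :=
  (ENNReal.summable (f := h)).hasSum.map ennEREAL continuous_coe_ennreal_ereal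

lemma tsum_erealCoe {ι : Type*} (h : ι → ℝ≥0∞) :
    (∑' j, ((h j : ℝ≥0∞) : EReal)) = ((∑' j, h j : ℝ≥0∞) : EReal) :=
  (hasSum_erealCoe h).tsum_eq

lemma ereal_tsum_le {ι : Type*} {f : ι → EReal} {h : ι → ℝ≥0∞} (hle : ∀ j, f j ≤ (h j : EReal)) :
    (∑' j, f j) ≤ ((∑' j, h j : ℝ≥0∞) : EReal) := by
  by_cases hs : Summable f
  · exact (tsum_erealCoe h) ▸ Summable.tsum_le_tsum hle hs (hasSum_erealCoe h).summable
  · rw [tsum_eq_zero_of_not_summable hs]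
    exact EReal.coe_ennreal_nonneg _

section Backward
variable {E : Type*} {q : E → E → ℝ}

lemma ereal_coe_ennreal_eq_coe_toReal {x : ℝ≥0∞} (hx : x ≠ ⊤) :
    (x : EReal) = ((x.toReal : ℝ) : EReal) := by
  conv_lhs => rw [← ENNReal.ofReal_toReal hx]
  rw [EReal.coe_ennreal_ofReal, max_eq_left ENNReal.toReal_nonneg]

lemma backward_no_test_sequence (hq : IsQMatrix q) (hirr : MatIrreducible q)
    (hrec : MatRecurrent (embed q)) {H : Set E} (hHne : H.Nonempty) (hHfin : H.Finite)
    {l : ℕ} {m : ℕ → E → ℝ≥0∞} (hm : IsMomentSeq q H m)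
    (hfin : ∀ i, m (l + 1) i ≠ ⊤)
    (y : ℕ → E → ℝ)
    (h1 : ∀ n : ℕ, BddAbove (Set.range (y n)) ∧
          ∀ i : E, (y n i : EReal) ≤
            (∑' j : E, if j ∈ H then 0 else (embed q i j : EReal) * (y n j : EReal))
              + (((((l : ℝ≥0∞) + 1) / ENNReal.ofReal (-q i i)) * m l i : ℝ≥0∞) : EReal))
    (h2 : (⨆ n : ℕ, ⨆ i ∈ H, (y n i : EReal)) = ⊤) : False := by
  classical
  obtain ⟨o, hro⟩ := hrec
  obtain ⟨h0, hh0⟩ := hHne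
  set g : E → ℝ≥0∞ := fun i => (((l : ℝ≥0∞) + 1) / ENNReal.ofReal (-q i i)) * m l i with hg
  have hmEq : ∀ i, m (l + 1) i
      = (∑' j, (if j ∈ H then 0 else embed q i j) * m (l + 1) j) + g i := (hm.2 l).1
  have hKrow : ∀ i, (∑' j, killed q H i j) ≤ 1 := killed_rowsum_le hq H
  set r : ℕ → E → ℝ≥0∞ := fun k => avoid (killed q H) k with hr
  have hrzero : ∀ i, (⨅ k, r k i) = 0 := iInf_avoid_killed_H hq hirr hro hh0
  have hrle1 : ∀ k i, r k i ≤ 1 := avoid_le_one hKrow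
  have hranti : Antitone r := avoid_antitone hKrow
  have key : ∀ n i, y n i ≤ (m (l + 1) i).toReal := by
    intro n
    set C : ℝ := max 0 (sSup (Set.range (y n))) with hC
    have hC0 : 0 ≤ C := le_max_left _ _
    have hyC : ∀ i, y n i ≤ C :=
      fun i => (le_csSup (h1 n).1 (Set.mem_range_self i)).trans (le_max_right _ _)
    set c : ℝ≥0∞ := ENNReal.ofReal C with hc
    have hcne : c ≠ ⊤ := ENNReal.ofReal_ne_top
    set b : ℕ → E → ℝ≥0∞ := fun k j => m (l + 1) j + c * r k j with hb
    have hbne : ∀ k j, b k j ≠ ⊤ := fun k j => ENNReal.add_ne_top.2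
      ⟨hfin j, ENNReal.mul_ne_top hcne (((hrle1 k j).trans_lt (by norm_num)).ne)⟩
    have claim : ∀ k i, (y n i : EReal) ≤ ((b k i : ℝ≥0∞) : EReal) := by
      intro k
      induction k with
      | zero =>
        intro i
        have h3 : (y n i : EReal) ≤ ((c : ℝ≥0∞) : EReal) := by
          rw [EReal.coe_ennreal_ofReal, max_eq_left hC0]
          exact EReal.coe_le_coe_iff.2 (hyC i)
        refine h3.trans (EReal.coe_ennreal_le_coe_ennreal_iff.2 ?_)
        have : r 0 i = 1 := rfl
        rw [hb]
        dsimp only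
        rw [this, mul_one]
        exact le_add_self
      | succ k ih =>
        intro i
        refine ((h1 n).2 i).trans ?_
        have hstep : (∑' j : E, if j ∈ H then 0 else (embed q i j : EReal) * (y n j : EReal))
            ≤ ((∑' j, killed q H i j * b k j : ℝ≥0∞) : EReal) := by
          refine ereal_tsum_le fun j => ?_
          by_cases hj : j ∈ H
          · rw [if_pos hj]
            unfold killed
            rw [if_pos hj, zero_mul]
            exact le_of_eq EReal.coe_ennreal_zero.symm
          · rw [if_neg hj]
            unfold killed
            rw [if_neg hj]
            have he : embed q i j ≠ ⊤ := embed_ne_top i j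
            rw [ereal_coe_ennreal_eq_coe_toReal he]
            have hyb : y n j ≤ (b k j).toReal := by
              have := ih j
              rw [ereal_coe_ennreal_eq_coe_toReal (hbne k j)] at this
              exact EReal.coe_le_coe_iff.1 this
            calc ((embed q i j).toReal : EReal) * (y n j : EReal)
                = (((embed q i j).toReal * y n j : ℝ) : EReal) := (EReal.coe_mul _ _).symm
              _ ≤ (((embed q i j).toReal * (b k j).toReal : ℝ) : EReal) :=
                  EReal.coe_le_coe_iff.2
                    (mul_le_mul_of_nonneg_left hyb ENNReal.toReal_nonneg)
              _ = ((embed q i j * b k j : ℝ≥0∞) : EReal) := by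
                  rw [← ENNReal.toReal_mul,
                    ← ereal_coe_ennreal_eq_coe_toReal (ENNReal.mul_ne_top he (hbne k j))]
        have hsum : (∑' j, killed q H i j * b k j) + g i = b (k + 1) i := by
          have hdist : ∀ j, killed q H i j * b k j
              = killed q H i j * m (l + 1) j + c * (killed q H i j * r k j) := by
            intro j
            rw [hb]
            dsimp only
            rw [mul_add]
            ring
          rw [tsum_congr hdist, ENNReal.tsum_add, ENNReal.tsum_mul_left]
          have : (∑' j, killed q H i j * r k j) = r (k + 1) i := rfl
          rw [this, hb]
          dsimp only
          rw [add_right_comm]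
          congr 1
          exact (hmEq i).symm
        calc (∑' j : E, if j ∈ H then 0 else (embed q i j : EReal) * (y n j : EReal))
              + ((g i : ℝ≥0∞) : EReal)
            ≤ ((∑' j, killed q H i j * b k j : ℝ≥0∞) : EReal) + ((g i : ℝ≥0∞) : EReal) :=
              add_le_add_left hstep _
          _ = (((∑' j, killed q H i j * b k j) + g i : ℝ≥0∞) : EReal) :=
              (EReal.coe_ennreal_add _ _).symm
          _ = ((b (k + 1) i : ℝ≥0∞) : EReal) := by rw [hsum]
    intro i
    have hreal : ∀ k, y n i ≤ (b k i).toReal := by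
      intro k
      have := claim k i
      rw [ereal_coe_ennreal_eq_coe_toReal (hbne k i)] at this
      exact EReal.coe_le_coe_iff.1 this
    have htendr : Tendsto (fun k => r k i) atTop (𝓝 0) := by
      have := tendsto_atTop_iInf (fun a b hab => hranti hab i)
      rwa [hrzero i] at this
    have htendb : Tendsto (fun k => b k i) atTop (𝓝 (m (l + 1) i)) := by
      have hmul : Tendsto (fun k => c * r k i) atTop (𝓝 0) := by
        have := ENNReal.Tendsto.const_mul htendr (Or.inr hcne)
        rwa [mul_zero] at this
      have := Tendsto.const_add (m (l + 1) i) hmul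
      rwa [add_zero] at this
    have htendbr : Tendsto (fun k => (b k i).toReal) atTop (𝓝 ((m (l + 1) i).toReal)) :=
      (ENNReal.tendsto_toReal (hfin i)).comp htendb
    exact ge_of_tendsto htendbr (Filter.Eventually.of_forall hreal)
  -- bound the double supremum
  set F : Finset E := hHfin.toFinset with hF
  have hFne : F.Nonempty := by
    rw [hF, Set.Finite.toFinset_nonempty]
    exact ⟨h0, hh0⟩
  set M : ℝ := F.sup' hFne (fun i => (m (l + 1) i).toReal) with hM
  have hbound : (⨆ n : ℕ, ⨆ i ∈ H, (y n i : EReal)) ≤ (M : EReal) := by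
    refine iSup_le fun n => iSup_le fun i => iSup_le fun hi => ?_
    refine (EReal.coe_le_coe_iff.2 ((key n i).trans ?_))
    have hiF : i ∈ F := hHfin.mem_toFinset.2 hi
    exact Finset.le_sup' (f := fun i => (m (l + 1) i).toReal) hiF
  rw [h2] at hbound
  exact absurd (hbound.trans_lt (EReal.coe_lt_top M)) (lt_irrefl ⊤)

end Backward


section Trunc
variable {E : Type*} (A : E → E → ℝ≥0∞) (g : E → ℝ≥0∞)

def trunc (S : Finset E) : ℕ → E → ℝ≥0∞
  | 0 => fun _ => 0
  | k + 1 => fun i => if i ∈ S then (∑ j ∈ S, A i j * trunc S k j) + g i else 0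

lemma trunc_mono_k (S : Finset E) : ∀ k, ∀ i, trunc A g S k i ≤ trunc A g S (k + 1) i := by
  intro k
  induction k with
  | zero => intro i; exact zero_le
  | succ k ih =>
    intro i
    show (if i ∈ S then _ else _) ≤ (if i ∈ S then _ else _)
    split
    · exact add_le_add_left (Finset.sum_le_sum fun j _ => mul_le_mul_right (ih j) _) _
    · exact le_rfl

lemma trunc_monotone_k (S : Finset E) : Monotone (trunc A g S) :=
  monotone_nat_of_le_succ fun k i => trunc_mono_k A g S k i

lemma trunc_mono_S {S S' : Finset E} (hS : S ⊆ S') : ∀ k i, trunc A g S k i ≤ trunc A g S' k i := by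
  intro k
  induction k with
  | zero => intro i; exact le_rfl
  | succ k ih =>
    intro i
    show (if i ∈ S then _ else _) ≤ (if i ∈ S' then _ else _)
    by_cases hi : i ∈ S
    · rw [if_pos hi, if_pos (hS hi)]
      refine add_le_add_left ?_ _
      refine le_trans (Finset.sum_le_sum fun j _ => mul_le_mul_right (ih j) _) ?_
      exact Finset.sum_le_sum_of_subset hS
    · rw [if_neg hi]
      exact zero_le

lemma trunc_ne_top (hA : ∀ i j, A i j ≠ ⊤) (hg : ∀ i, g i ≠ ⊤) (S : Finset E) :
    ∀ k i, trunc A g S k i ≠ ⊤ := by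
  intro k
  induction k with
  | zero => intro i; exact ENNReal.zero_ne_top
  | succ k ih =>
    intro i
    show (if i ∈ S then _ else _) ≠ ⊤
    split
    · refine ENNReal.add_ne_top.2 ⟨?_, hg i⟩
      refine (ENNReal.sum_lt_top.2 fun j _ => ?_).ne
      exact ENNReal.mul_lt_top (hA i j).lt_top (ih j).lt_top
    · exact ENNReal.zero_ne_top

lemma trunc_support (S : Finset E) : ∀ k, ∀ i ∉ S, trunc A g S k i = 0 := by
  intro k i hi
  cases k with
  | zero => rfl
  | succ k => exact if_neg hi

lemma trunc_subsol (S : Finset E) (k : ℕ) (i : E) :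
    trunc A g S k i ≤ (∑' j, A i j * trunc A g S k j) + g i := by
  refine (trunc_mono_k A g S k i).trans ?_
  show (if i ∈ S then _ else _) ≤ _
  split
  · refine add_le_add_left ?_ _
    refine le_trans (le_of_eq ?_) (ENNReal.sum_le_tsum S)
    rfl
  · exact zero_le

end Trunc


section Forward
variable {E : Type*} [Countable E] {q : E → E → ℝ}

lemma forward_test_sequence (hq : IsQMatrix q) (hirr : MatIrreducible q)
    {H : Set E} (hHne : H.Nonempty) {l : ℕ} {m : ℕ → E → ℝ≥0∞} (hm : IsMomentSeq q H m)
    (hlerg : ∀ i, m l i ≠ ⊤) (hnot : ¬ ∀ i, m (l + 1) i ≠ ⊤) :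
    ∃ y : ℕ → E → ℝ,
      (∀ n : ℕ, BddAbove (Set.range (y n)) ∧
        ∀ i : E, (y n i : EReal) ≤
          (∑' j : E, if j ∈ H then 0 else (embed q i j : EReal) * (y n j : EReal))
            + (((((l : ℝ≥0∞) + 1) / ENNReal.ofReal (-q i i)) * m l i : ℝ≥0∞) : EReal)) ∧
      (⨆ n : ℕ, ⨆ i ∈ H, (y n i : EReal)) = ⊤ := by
  classical
  set g : E → ℝ≥0∞ := fun i => (((l : ℝ≥0∞) + 1) / ENNReal.ofReal (-q i i)) * m l i with hgdef
  have hgne : ∀ i, g i ≠ ⊤ := by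
    intro i
    refine ENNReal.mul_ne_top ?_ (hlerg i)
    refine (ENNReal.div_lt_top ?_ ?_).ne
    · exact (ENNReal.add_ne_top.2 ⟨ENNReal.natCast_ne_top l, ENNReal.one_ne_top⟩)
    · exact (ENNReal.ofReal_pos.2 (hq.diag_neg i)).ne'
  set A : E → E → ℝ≥0∞ := killed q H with hAdef
  have hAne : ∀ i j, A i j ≠ ⊤ := by
    intro i j
    rw [hAdef]
    unfold killed
    split
    · exact ENNReal.zero_ne_top
    · exact embed_ne_top i j
  have hmEq : ∀ i, m (l + 1) i = (∑' j, A i j * m (l + 1) j) + g i := (hm.2 l).1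
  have hmMin := (hm.2 l).2
  push_neg at hnot
  obtain ⟨i0, hi0⟩ := hnot
  -- propagate the infinite value into H
  have hprop : ∀ i j, j ∉ H → 0 < q i j → m (l + 1) j = ⊤ → m (l + 1) i = ⊤ := by
    intro i j hjH hqij hmj
    have hAij : A i j = embed q i j := by
      rw [hAdef]; unfold killed; rw [if_neg hjH]
    have hApos : 0 < A i j := by
      rw [hAij]
      exact embed_pos hq (q_edge_ne hq hqij) hqij
    refine top_le_iff.1 ?_
    rw [hmEq i]
    refine le_add_of_le_of_nonneg (le_trans ?_ (ENNReal.le_tsum j)) (zero_le)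
    rw [hmj, ENNReal.mul_top hApos.ne']
  have hHtop : ∃ h ∈ H, m (l + 1) h = ⊤ := by
    by_cases hi0H : i0 ∈ H
    · exact ⟨i0, hi0H, hi0⟩
    · obtain ⟨h0, hh0⟩ := hHne
      have hne : h0 ≠ i0 := fun hcon => hi0H (hcon ▸ hh0)
      have htg := hirr h0 i0 hne
      have hclaim : ∀ a, Relation.TransGen (fun a b => 0 < q a b) a i0 →
          (m (l + 1) a = ⊤ ∨ ∃ h ∈ H, m (l + 1) h = ⊤) := by
        intro a htg'
        induction htg' using Relation.TransGen.head_induction_on with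
        | single hr => exact Or.inl (hprop _ _ hi0H hr hi0)
        | head hr _ ih =>
          rcases ih with htop | hex
          · rename_i b c _
            by_cases hbH : c ∈ H
            · exact Or.inr ⟨c, hbH, htop⟩
            · exact Or.inl (hprop _ _ hbH hr htop)
          · exact Or.inr hex
      rcases hclaim h0 htg with htop | hex
      · exact ⟨h0, hh0, htop⟩
      · exact hex
  obtain ⟨h, hhH, hmh⟩ := hHtop
  -- exhaust E by finite sets
  have : Nonempty E := ⟨i0⟩
  obtain ⟨e, he⟩ := exists_surjective_nat E
  set S : ℕ → Finset E := fun n => (Finset.range (n + 1)).image e with hS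
  have hSmono : ∀ {a b : ℕ}, a ≤ b → S a ⊆ S b := by
    intro a b hab
    refine Finset.image_subset_image ?_
    exact Finset.range_subset_range.2 (by omega)
  have hScov : ∀ i : E, ∃ N, ∀ n, N ≤ n → i ∈ S n := by
    intro i
    obtain ⟨N, hN⟩ := he i
    exact ⟨N, fun n hn => Finset.mem_image.2 ⟨N, Finset.mem_range.2 (by omega), hN⟩⟩
  set w : ℕ → E → ℝ≥0∞ := fun n => trunc A g (S n) n with hw
  have hwmono : Monotone w := by
    intro a b hab i
    exact (trunc_monotone_k A g (S a) hab i).trans (trunc_mono_S A g (hSmono hab) b i)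
  have hwne : ∀ n i, w n i ≠ ⊤ := fun n i => trunc_ne_top A g hAne hgne (S n) n i
  set V : E → ℝ≥0∞ := fun i => ⨆ n, w n i with hV
  have hVsol : ∀ i, V i = (∑' j, A i j * V j) + g i := by
    intro i
    refine le_antisymm ?_ ?_
    · refine iSup_le fun n => (trunc_subsol A g (S n) n i).trans ?_
      refine add_le_add_left (Summable.tsum_le_tsum (fun j => mul_le_mul_right ?_ _)
        ENNReal.summable ENNReal.summable) _
      exact le_iSup (fun n => w n j) n
    · have hMCT : (∑' j, A i j * V j) = ⨆ n, ∑' j, A i j * w n j := by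
        rw [hV]
        simp_rw [ENNReal.mul_iSup]
        exact tsum_iSup_mono fun a b hab j => mul_le_mul_right (hwmono hab j) _
      rw [hMCT, ENNReal.iSup_add]
      obtain ⟨N, hN⟩ := hScov i
      refine iSup_le fun n => ?_
      set n' := max n N with hn'
      have h1 : (∑' j, A i j * w n j) + g i ≤ (∑' j, A i j * w n' j) + g i :=
        add_le_add_left (Summable.tsum_le_tsum (fun j => mul_le_mul_right
          (hwmono (le_max_left n N) j) _) ENNReal.summable ENNReal.summable) _
      refine h1.trans ?_
      have h2 : (∑' j, A i j * w n' j) = ∑ j ∈ S n', A i j * w n' j := by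
        refine tsum_eq_sum fun j hj => ?_
        rw [hw]
        dsimp only
        rw [trunc_support A g (S n') n' j hj, mul_zero]
      have h3 : (∑ j ∈ S n', A i j * w n' j) + g i = trunc A g (S n') (n' + 1) i := by
        have hin : i ∈ S n' := hN n' (le_max_right n N)
        show _ = if i ∈ S n' then _ else _
        rw [if_pos hin]
      rw [h2, h3]
      refine le_trans (le_trans (trunc_mono_S A g (hSmono (Nat.le_succ n')) (n' + 1) i) ?_)
        (le_iSup (fun n => w n i) (n' + 1))
      exact le_rfl
  have hVtop : V h = ⊤ := top_le_iff.1 (hmh ▸ hmMin V hVsol h)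
  -- the test sequence
  refine ⟨fun n i => (w n i).toReal, fun n => ⟨?_, ?_⟩, ?_⟩
  · -- bounded above
    refine Set.Finite.bddAbove (Set.Finite.subset
      (Set.Finite.insert 0 ((S n).finite_toSet.image (fun i => (w n i).toReal))) ?_)
    rintro x ⟨i, rfl⟩
    by_cases hi : i ∈ S n
    · exact Set.mem_insert_of_mem _ ⟨i, hi, rfl⟩
    · rw [hw]
      dsimp only
      rw [trunc_support A g (S n) n i hi]
      exact Set.mem_insert _ _
  · -- subsolution inequality in EReal
    intro i
    have hterm : ∀ j, (if j ∈ H then 0 else (embed q i j : EReal) * (((w n j).toReal : ℝ) : EReal))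
        = ((A i j * w n j : ℝ≥0∞) : EReal) := by
      intro j
      by_cases hj : j ∈ H
      · rw [if_pos hj]
        have : A i j = 0 := by rw [hAdef]; unfold killed; rw [if_pos hj]
        rw [this, zero_mul, EReal.coe_ennreal_zero]
      · rw [if_neg hj]
        have hA2 : A i j = embed q i j := by rw [hAdef]; unfold killed; rw [if_neg hj]
        rw [hA2, ereal_coe_ennreal_eq_coe_toReal (ENNReal.mul_ne_top (embed_ne_top i j)
          (hwne n j)), ENNReal.toReal_mul, EReal.coe_mul,
          ← ereal_coe_ennreal_eq_coe_toReal (embed_ne_top i j)]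
    calc (((w n i).toReal : ℝ) : EReal) = ((w n i : ℝ≥0∞) : EReal) :=
        (ereal_coe_ennreal_eq_coe_toReal (hwne n i)).symm
      _ ≤ (((∑' j, A i j * w n j) + g i : ℝ≥0∞) : EReal) :=
        EReal.coe_ennreal_le_coe_ennreal_iff.2 (trunc_subsol A g (S n) n i)
      _ = ((∑' j, A i j * w n j : ℝ≥0∞) : EReal) + ((g i : ℝ≥0∞) : EReal) :=
        EReal.coe_ennreal_add _ _
      _ = (∑' j : E, if j ∈ H then 0 else (embed q i j : EReal)
            * (((w n j).toReal : ℝ) : EReal)) + ((g i : ℝ≥0∞) : EReal) := by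
        rw [← tsum_erealCoe (fun j => A i j * w n j), tsum_congr hterm]
  · -- unbounded on H
    rw [iSup_eq_top]
    intro b hb
    have hwh : (⨆ n, w n h) = ⊤ := hVtop
    induction b using EReal.rec with
    | bot =>
      refine ⟨0, lt_of_lt_of_le (EReal.bot_lt_coe ((w 0 h).toReal)) ?_⟩
      have h4 : (((w 0 h).toReal : ℝ) : EReal) ≤ ⨆ i ∈ H, (((w 0 i).toReal : ℝ) : EReal) :=
        le_iSup₂ (f := fun (i : E) (_ : i ∈ H) => (((w 0 i).toReal : ℝ) : EReal)) h hhH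
      exact h4
    | coe r =>
      have hlt : ENNReal.ofReal (max r 0) < ⨆ n, w n h := by
        rw [hwh]
        exact ENNReal.ofReal_lt_top.trans_le le_top
      obtain ⟨n, hn⟩ := lt_iSup_iff.1 hlt
      refine ⟨n, lt_of_lt_of_le ?_
        (le_iSup₂ (f := fun (i : E) (_ : i ∈ H) => (((w n i).toReal : ℝ) : EReal)) h hhH)⟩
      have h5 : max r 0 < (w n h).toReal := by
        have := ENNReal.toReal_lt_toReal ENNReal.ofReal_ne_top (hwne n h) |>.2 hn
        rwa [ENNReal.toReal_ofReal (le_max_right r 0)] at this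
      exact EReal.coe_lt_coe_iff.2 (lt_of_le_of_lt (le_max_left r 0) h5)
    | top => exact absurd hb (lt_irrefl ⊤)

end Forward

-- MOREAUX
end MyAux

/-- Inverse problem criterion for algebraic ergodicity of a continuous-time Markov chain. -/
theorem not_succ_ergodic_iff_test_sequence {E : Type*} [Countable E]
    (q : E → E → ℝ) (H : Set E) (l : ℕ)
    (hq : IsQMatrix q) (hirr : MatIrreducible q) (hreg : QRegular q)
    (hrec : MatRecurrent (embed q)) (hHne : H.Nonempty) (hHfin : H.Finite)
    (m : ℕ → E → ℝ≥0∞) (hm : IsMomentSeq q H m)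
    (hlerg : ∀ i, m l i ≠ ⊤) :
    (¬ ∀ i, m (l + 1) i ≠ ⊤) ↔
      ∃ y : ℕ → E → ℝ,
        (∀ n : ℕ, BddAbove (Set.range (y n)) ∧
          ∀ i : E, (y n i : EReal) ≤
            (∑' j : E, if j ∈ H then 0 else (embed q i j : EReal) * (y n j : EReal))
              + (((((l : ℝ≥0∞) + 1) / ENNReal.ofReal (-q i i)) * m l i : ℝ≥0∞) : EReal)) ∧
        (⨆ n : ℕ, ⨆ i ∈ H, (y n i : EReal)) = ⊤ := by
  constructor
  · intro hnot
    exact MyAux.forward_test_sequence hq hirr hHne hm hlerg hnot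
  · rintro ⟨y, h1, h2⟩ hall
    exact MyAux.backward_no_test_sequence hq hirr hrec hHne hHfin hm hall y h1 h2
end
end
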